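/- arXiv:1902.06413 — 3 statements merged into one kernel-verified Lean document; each statement's English description precedes it below -/
import Mathlib

section
/- Let A be a symmetrizable GCM, Y a subdiagram of its Dynkin diagram of affine type with null root δ_Y, and β a root of A with (β, δ_Y) = 0. Then the support of β is contained in Y ⊔ Y⊥, where Y⊥ is the set of vertices not in Y and not adjacent to Y. -/
set_option synthInstance.maxHeartbeats 1000000
set_option maxHeartbeats 1000000

/-- A generalized Cartan matrix (GCM). -/
def IsGCM {ι : Type*} (A : Matrix ι ι ℤ) : Prop :=
  (∀ i, A i i = 2) ∧ (∀ i j, i ≠ j → A i j ≤ 0) ∧ (∀ i j, A i j = 0 → A j i = 0)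

/-- An indecomposable matrix (connected Dynkin diagram). -/
def IsIndecomposable {ι : Type*} (A : Matrix ι ι ℤ) : Prop :=
  ∀ s : Set ι, s.Nonempty → sᶜ.Nonempty → ∃ i ∈ s, ∃ j ∈ sᶜ, A i j ≠ 0

/-- An abstract model of the root-lattice data of a symmetrizable Kac-Moody algebra `g(A)`:
the root lattice is realized inside `ι → ℚ`, simple roots being the coordinate vectors;
together with the root system, real/imaginary roots, invariant symmetric bilinear form,
coroot pairing `⟨β∨, γ⟩`, root strings and simple reflections. -/
structure KacMoodyRootSystem (ι : Type) [Fintype ι] [DecidableEq ι] where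
  A : Matrix ι ι ℤ
  isGCM : IsGCM A
  d : ι → ℚ
  d_pos : ∀ i, 0 < d i
  d_symm : ∀ i j, d i * A i j = d j * A j i
  roots : Set (ι → ℚ)
  realRoots : Set (ι → ℚ)
  imRoots : Set (ι → ℚ)
  real_sub : realRoots ⊆ roots
  im_sub : imRoots ⊆ roots
  roots_eq_union : roots = realRoots ∪ imRoots
  zero_not_root : (0 : ι → ℚ) ∉ roots
  neg_root : ∀ α ∈ roots, -α ∈ roots
  neg_real : ∀ α ∈ realRoots, -α ∈ realRoots
  simple_real : ∀ i, Pi.single i 1 ∈ realRoots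
  root_int : ∀ α ∈ roots, ∀ i, ∃ k : ℤ, α i = (k : ℚ)
  root_sign : ∀ α ∈ roots, (∀ i, 0 ≤ α i) ∨ (∀ i, α i ≤ 0)
  root_connected : ∀ α ∈ roots, ∀ s : Set ι,
      (∃ i ∈ s, α i ≠ 0) → (∃ j ∉ s, α j ≠ 0) →
      ∃ i ∈ s, ∃ j ∉ s, α i ≠ 0 ∧ α j ≠ 0 ∧ A i j ≠ 0
  form : (ι → ℚ) →ₗ[ℚ] (ι → ℚ) →ₗ[ℚ] ℚ
  form_symm : ∀ x y, form x y = form y x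
  form_simple : ∀ i j, form (Pi.single i 1) (Pi.single j 1) = d i * A i j
  real_norm_pos : ∀ α ∈ realRoots, 0 < form α α
  im_norm_nonpos : ∀ α ∈ imRoots, form α α ≤ 0
  root_norm_criterion : ∀ α ∈ roots, 0 < form α α → α ∈ realRoots
  pairing : (ι → ℚ) → (ι → ℚ) → ℤ
  pairing_eq : ∀ α ∈ realRoots, ∀ x, form α α * (pairing α x : ℚ) = 2 * form α x
  rootString : ∀ β ∈ realRoots, ∀ γ ∈ roots, γ ≠ β → γ ≠ -β →
      ∃ p q : ℕ, ((p : ℤ) - (q : ℤ) = pairing β γ ∧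
        ∀ k : ℤ, γ + (k : ℚ) • β ∈ roots ↔ -(p : ℤ) ≤ k ∧ k ≤ (q : ℤ))
  reflection : ι → ((ι → ℚ) ≃ₗ[ℚ] (ι → ℚ))
  reflection_apply : ∀ i x,
      reflection i x = x - (pairing (Pi.single i 1) x : ℚ) • (Pi.single i 1 : ι → ℚ)
  reflection_root : ∀ i, ∀ α ∈ roots, reflection i α ∈ roots
  reflection_real : ∀ i, ∀ α ∈ realRoots, reflection i α ∈ realRoots
  reflection_im : ∀ i, ∀ α ∈ imRoots, reflection i α ∈ imRoots
  reflection_form : ∀ i x y, form (reflection i x) (reflection i y) = form x y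
  reflection_pos : ∀ i, ∀ α ∈ realRoots, (∀ j, 0 ≤ α j) → α ≠ Pi.single i 1 →
      ∀ j, 0 ≤ reflection i α j

namespace KacMoodyRootSystem

variable {ι : Type} [Fintype ι] [DecidableEq ι]

/-- The Weyl group `W(A)`, generated by the simple reflections. -/
def Weyl (K : KacMoodyRootSystem ι) : Subgroup ((ι → ℚ) ≃ₗ[ℚ] (ι → ℚ)) :=
  Subgroup.closure (Set.range K.reflection)

/-- The standard parabolic subgroup `W(S)` generated by the simple reflections at `S`. -/
def ParabolicWeyl (K : KacMoodyRootSystem ι) (S : Set ι) :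
    Subgroup ((ι → ℚ) ≃ₗ[ℚ] (ι → ℚ)) :=
  Subgroup.closure (K.reflection '' S)

/-- `Y⊥`: vertices neither in `Y` nor adjacent to `Y`. -/
def Perp (K : KacMoodyRootSystem ι) (Y : Set ι) : Set ι :=
  {p | p ∉ Y ∧ ∀ q ∈ Y, K.A p q = 0}

/-- A π-system: a family of distinct real roots whose pairwise differences are not roots. -/
def IsPiSys (K : KacMoodyRootSystem ι) {κ : Type} (β : κ → (ι → ℚ)) : Prop :=
  Function.Injective β ∧ (∀ i, β i ∈ K.realRoots) ∧
    ∀ i j, i ≠ j → β i - β j ∉ K.roots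

/-- A π-system of type `B`: a π-system whose matrix `M(Σ) = (⟨βᵢ∨, βⱼ⟩)` equals `B`. -/
def IsPiSysOfType (K : KacMoodyRootSystem ι) {κ : Type} (β : κ → (ι → ℚ))
    (B : Matrix κ κ ℤ) : Prop :=
  K.IsPiSys β ∧ ∀ i j, K.pairing (β i) (β j) = B i j

/-- `δ` is the null root of an affine-type subdiagram `Y`: it is a positive imaginary
isotropic root supported exactly on `Y`, orthogonal to all simple roots of `Y`. -/
def IsAffineNullRoot (K : KacMoodyRootSystem ι) (Y : Set ι) (δ : ι → ℚ) : Prop :=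
  (∀ q, δ q ≠ 0 ↔ q ∈ Y) ∧ (∀ q, 0 ≤ δ q) ∧ (∀ q, ∃ k : ℤ, δ q = (k : ℚ)) ∧
    δ ∈ K.imRoots ∧ (∀ q ∈ Y, K.form δ (Pi.single q 1) = 0) ∧ K.form δ δ = 0

end KacMoodyRootSystem

/-! Every simple root pairs nonpositively with `δ_Y`: on `Y` by orthogonality, and off `Y`
because `(α_p, δ_Y) = Σ_{q ∈ Y} δ_q d_q a_qp` with `a_qp ≤ 0`. For a root of constant sign,
say `β = Σ β_p α_p` with `β_p ≥ 0`, the sum `(β, δ_Y) = Σ β_p (α_p, δ_Y)` of nonpositive terms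
vanishes only if `(α_p, δ_Y) = 0` on the support of `β`, and for `p ∉ Y` this forces
`a_qp = 0` for every `q ∈ Y`. -/

namespace KacMoodyRootSystem

variable {ι : Type} [Fintype ι] [DecidableEq ι] (K : KacMoodyRootSystem ι)

theorem form_eq_sum_mul_form_single (x y : ι → ℚ) :
    K.form x y = ∑ p, x p * K.form (Pi.single p 1) y := by
  conv_lhs => rw [pi_eq_sum_univ' x]
  simp only [map_sum, map_smul, LinearMap.sum_apply, LinearMap.smul_apply, smul_eq_mul]

theorem form_single_eq_sum (p : ι) (x : ι → ℚ) :
    K.form (Pi.single p 1) x = ∑ q, x q * (K.d q * K.A q p) := by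
  rw [K.form_symm, form_eq_sum_mul_form_single]
  simp only [form_simple]

variable {K}

theorem mul_d_mul_A_nonpos_of_nonneg {x : ι → ℚ} (hx : ∀ q, 0 ≤ x q) {p q : ι}
    (hxp : x p = 0) : x q * (K.d q * K.A q p) ≤ 0 := by
  rcases eq_or_ne q p with rfl | hqp
  · simp [hxp]
  · have hA : (K.A q p : ℚ) ≤ 0 := by exact_mod_cast K.isGCM.2.1 q p hqp
    exact mul_nonpos_of_nonneg_of_nonpos (hx q)
      (mul_nonpos_of_nonneg_of_nonpos (K.d_pos q).le hA)

theorem form_single_nonpos_of_isAffineNullRoot {Y : Set ι} {δ : ι → ℚ}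
    (hY : K.IsAffineNullRoot Y δ) (p : ι) : K.form (Pi.single p 1) δ ≤ 0 := by
  obtain ⟨hsupp, hnonneg, -, -, horth, -⟩ := hY
  by_cases hp : p ∈ Y
  · rw [K.form_symm, horth p hp]
  · rw [form_single_eq_sum]
    exact Finset.sum_nonpos fun q _ =>
      mul_d_mul_A_nonpos_of_nonneg hnonneg (not_not.mp fun h => hp ((hsupp p).mp h))

theorem mem_perp_of_form_single_eq_zero {Y : Set ι} {δ : ι → ℚ}
    (hY : K.IsAffineNullRoot Y δ) {p : ι} (hp : p ∉ Y)
    (hform : K.form (Pi.single p 1) δ = 0) : p ∈ K.Perp Y := by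
  obtain ⟨hsupp, hnonneg, -⟩ := hY
  have hδp : δ p = 0 := not_not.mp fun h => hp ((hsupp p).mp h)
  rw [form_single_eq_sum, Finset.sum_eq_zero_iff_of_nonpos fun q _ =>
    mul_d_mul_A_nonpos_of_nonneg hnonneg hδp] at hform
  refine ⟨hp, fun q hq => K.isGCM.2.2 q p ?_⟩
  simpa only [mul_eq_zero, (hsupp q).mpr hq, (K.d_pos q).ne', Int.cast_eq_zero, false_or]
    using hform q (Finset.mem_univ q)

theorem form_single_eq_zero_of_form_eq_zero {x y : ι → ℚ} (hx : ∀ r, 0 ≤ x r)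
    (hy : ∀ r, K.form (Pi.single r 1) y ≤ 0) (hxy : K.form x y = 0) {p : ι} (hp : x p ≠ 0) :
    K.form (Pi.single p 1) y = 0 := by
  rw [form_eq_sum_mul_form_single, Finset.sum_eq_zero_iff_of_nonpos fun r _ =>
    mul_nonpos_of_nonneg_of_nonpos (hx r) (hy r)] at hxy
  exact (mul_eq_zero.mp (hxy p (Finset.mem_univ p))).resolve_left hp

theorem mem_union_perp_of_nonneg_of_form_eq_zero {Y : Set ι} {δ β : ι → ℚ}
    (hY : K.IsAffineNullRoot Y δ) (hβ : ∀ r, 0 ≤ β r) (hperp : K.form β δ = 0)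
    {p : ι} (hp : β p ≠ 0) : p ∈ Y ∪ K.Perp Y := by
  by_cases hpY : p ∈ Y
  · exact Or.inl hpY
  · exact Or.inr <| mem_perp_of_form_single_eq_zero hY hpY <|
      form_single_eq_zero_of_form_eq_zero hβ (form_single_nonpos_of_isAffineNullRoot hY) hperp hp

end KacMoodyRootSystem

/-- If Y is an affine subdiagram with null root δ_Y and β is a root with
(β, δ_Y) = 0, then the support of β is contained in Y ⊔ Y⊥. -/
theorem support_sub_of_orthogonal_nullroot {ι : Type} [Fintype ι] [DecidableEq ι]
    (K : KacMoodyRootSystem ι) (Y : Set ι) (δY : ι → ℚ)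
    (hY : K.IsAffineNullRoot Y δY)
    (β : ι → ℚ) (hβ : β ∈ K.roots) (hperp : K.form β δY = 0) :
    ∀ p, β p ≠ 0 → p ∈ Y ∪ K.Perp Y := by
  intro p hp
  rcases K.root_sign β hβ with hpos | hneg
  · exact K.mem_union_perp_of_nonneg_of_form_eq_zero hY hpos hperp hp
  · refine K.mem_union_perp_of_nonneg_of_form_eq_zero hY (β := -β) (fun r => ?_) ?_ ?_
    · simpa using hneg r
    · simp [hperp]
    · simpa using hp
end

section
/- Let A be a symmetrizable GCM, B an affine GCM, and Σ a linearly independent π-system of type B in A. Then there exist an affine subdiagram Y of the Dynkin diagram of A and w ∈ W(A) such that every element of wΣ is supported in Y. Moreover if (Y′, w′) is another such pair, then Y = Y′ and w′w⁻¹ ∈ W(Y ⊔ Y⊥). -/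
set_option synthInstance.maxHeartbeats 1000000
set_option maxHeartbeats 1000000

set_option linter.unusedSectionVars false

namespace KacMoodyRootSystem

open Finset

variable {ι : Type} [Fintype ι] [DecidableEq ι]

/-- coordinatewise nonnegative -/
def Posv (x : ι → ℚ) : Prop := ∀ p, 0 ≤ x p

/-- coordinatewise nonpositive -/
def Negv (x : ι → ℚ) : Prop := ∀ p, x p ≤ 0

lemma posv_single (q : ι) : Posv (Pi.single q 1 : ι → ℚ) := by
  intro p
  rcases eq_or_ne p q with rfl | h
  · simp
  · simp [Pi.single_apply, h]

lemma posv_negv_eq_zero {x : ι → ℚ} (h1 : Posv x) (h2 : Negv x) : x = 0 :=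
  funext fun p => le_antisymm (h2 p) (h1 p)

lemma negv_neg {x : ι → ℚ} (h : Posv x) : Negv (-x) := fun p => by
  simpa using h p

lemma single_smul_eq (x : ι → ℚ) (q : ι) :
    x q • (Pi.single q 1 : ι → ℚ) = Pi.single q (x q) := by
  funext p
  rcases eq_or_ne p q with rfl | h
  · simp
  · simp [Pi.single_apply, h]

lemma sum_single_smul (x : ι → ℚ) : ∑ q, x q • (Pi.single q 1 : ι → ℚ) = x := by
  have : ∀ q, x q • (Pi.single q 1 : ι → ℚ) = Pi.single q (x q) :=
    fun q => single_smul_eq x q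
  rw [Finset.sum_congr rfl (fun q _ => this q)]
  exact Finset.univ_sum_single x

variable (K : KacMoodyRootSystem ι)

lemma form_sum_left {κ : Type*} (s : Finset κ) (f : κ → ι → ℚ) (y : ι → ℚ) :
    K.form (∑ i ∈ s, f i) y = ∑ i ∈ s, K.form (f i) y := by
  rw [map_sum]
  exact LinearMap.sum_apply _ _ _

lemma form_smul_left (a : ℚ) (x y : ι → ℚ) : K.form (a • x) y = a * K.form x y := by
  rw [map_smul]
  rfl

lemma form_sum_right {κ : Type*} (s : Finset κ) (x : ι → ℚ) (f : κ → ι → ℚ) :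
    K.form x (∑ i ∈ s, f i) = ∑ i ∈ s, K.form x (f i) :=
  map_sum (K.form x) _ _

lemma form_smul_right (a : ℚ) (x y : ι → ℚ) : K.form x (a • y) = a * K.form x y := by
  rw [map_smul]
  rfl

lemma form_expand_left (x y : ι → ℚ) :
    K.form x y = ∑ q, x q * K.form (Pi.single q 1) y := by
  conv_lhs => rw [← sum_single_smul x]
  rw [form_sum_left]
  exact Finset.sum_congr rfl fun q _ => form_smul_left K _ _ _

lemma form_expand_right (x y : ι → ℚ) :
    K.form x y = ∑ q, y q * K.form x (Pi.single q 1) := by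
  conv_lhs => rw [← sum_single_smul y]
  rw [form_sum_right]
  exact Finset.sum_congr rfl fun q _ => form_smul_right K _ _ _

lemma root_ne_zero {γ : ι → ℚ} (h : γ ∈ K.roots) : γ ≠ 0 :=
  fun h0 => K.zero_not_root (h0 ▸ h)

lemma pairing_spec {β : ι → ℚ} (hβ : β ∈ K.realRoots) (x : ι → ℚ) :
    (K.pairing β x : ℚ) * K.form β β = 2 * K.form β x := by
  rw [mul_comm]; exact K.pairing_eq β hβ x

lemma pairing_eq_of {β : ι → ℚ} (hβ : β ∈ K.realRoots) (x : ι → ℚ) (r : ℚ)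
    (h : 2 * K.form β x = r * K.form β β) : (K.pairing β x : ℚ) = r := by
  have hc : K.form β β ≠ 0 := (K.real_norm_pos β hβ).ne'
  have h2 := pairing_spec K hβ x
  exact mul_right_cancel₀ hc (h2.trans h)

lemma form_single_single (q p : ι) :
    K.form (Pi.single q 1) (Pi.single p 1) = K.d q * K.A q p :=
  K.form_simple q p

lemma norm_single (q : ι) :
    K.form (Pi.single q 1) (Pi.single q 1) = 2 * K.d q := by
  rw [form_single_single, K.isGCM.1 q]
  push_cast
  ring

lemma pairing_single_single (q p : ι) :
    (K.pairing (Pi.single q 1) (Pi.single p 1) : ℚ) = (K.A q p : ℚ) := by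
  apply pairing_eq_of K (K.simple_real q)
  rw [form_single_single, norm_single]
  ring

lemma pairing_single_self (q : ι) :
    (K.pairing (Pi.single q 1) (Pi.single q 1) : ℚ) = 2 := by
  rw [pairing_single_single, K.isGCM.1 q]
  norm_num

lemma refl_single (q : ι) : K.reflection q (Pi.single q 1) = -(Pi.single q 1 : ι → ℚ) := by
  rw [K.reflection_apply, pairing_single_self]
  module

lemma form_single_refl (j : ι) (x : ι → ℚ) :
    K.form (Pi.single j 1) (K.reflection j x) = -K.form (Pi.single j 1) x := by
  rw [K.reflection_apply, map_sub, form_smul_right]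
  have h := pairing_spec K (K.simple_real j) x
  nlinarith [h]

lemma pairing_single_refl (j : ι) (x : ι → ℚ) :
    (K.pairing (Pi.single j 1) (K.reflection j x) : ℚ) = -(K.pairing (Pi.single j 1) x : ℚ) := by
  apply pairing_eq_of K (K.simple_real j)
  rw [form_single_refl]
  have h := pairing_spec K (K.simple_real j) x
  nlinarith [h]

lemma refl_refl (j : ι) (x : ι → ℚ) : K.reflection j (K.reflection j x) = x := by
  rw [K.reflection_apply (i := j) (x := K.reflection j x), pairing_single_refl,
    K.reflection_apply (i := j) (x := x)]
  module

/-- product of simple reflections along a list of indices -/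
noncomputable def Wl (l : List ι) : (ι → ℚ) ≃ₗ[ℚ] (ι → ℚ) := (l.map K.reflection).prod

variable {K}

lemma lmul_apply (f g : (ι → ℚ) ≃ₗ[ℚ] (ι → ℚ)) (x : ι → ℚ) : (f * g) x = f (g x) := rfl

lemma lone_apply (x : ι → ℚ) : (1 : (ι → ℚ) ≃ₗ[ℚ] (ι → ℚ)) x = x := rfl

@[simp] lemma Wl_nil : K.Wl [] = 1 := rfl

@[simp] lemma Wl_cons (j : ι) (l : List ι) : K.Wl (j :: l) = K.reflection j * K.Wl l := by
  simp [Wl]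

lemma Wl_append (l₁ l₂ : List ι) : K.Wl (l₁ ++ l₂) = K.Wl l₁ * K.Wl l₂ := by
  simp [Wl]

lemma Wl_concat (l : List ι) (j : ι) : K.Wl (l.concat j) = K.Wl l * K.reflection j := by
  rw [List.concat_eq_append, Wl_append]
  simp [Wl]

lemma refl_mul_self (j : ι) : K.reflection j * K.reflection j = 1 :=
  LinearEquiv.ext fun x => refl_refl K j x

lemma refl_inv (j : ι) : (K.reflection j)⁻¹ = K.reflection j :=
  inv_eq_of_mul_eq_one_left (refl_mul_self j)

lemma Wl_form (l : List ι) (x y : ι → ℚ) :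
    K.form (K.Wl l x) (K.Wl l y) = K.form x y := by
  induction l with
  | nil => rfl
  | cons j l ih =>
      rw [Wl_cons, lmul_apply, lmul_apply, K.reflection_form, ih]

lemma Wl_root (l : List ι) {γ : ι → ℚ} (h : γ ∈ K.roots) : K.Wl l γ ∈ K.roots := by
  induction l with
  | nil => exact h
  | cons j l ih => rw [Wl_cons, lmul_apply]; exact K.reflection_root j _ ih

lemma Wl_real (l : List ι) {γ : ι → ℚ} (h : γ ∈ K.realRoots) : K.Wl l γ ∈ K.realRoots := by
  induction l with
  | nil => exact h
  | cons j l ih => rw [Wl_cons, lmul_apply]; exact K.reflection_real j _ ih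

lemma Wl_im (l : List ι) {γ : ι → ℚ} (h : γ ∈ K.imRoots) : K.Wl l γ ∈ K.imRoots := by
  induction l with
  | nil => exact h
  | cons j l ih => rw [Wl_cons, lmul_apply]; exact K.reflection_im j _ ih

lemma single_norm_form (j : ι) (c : ℚ) :
    K.form (Pi.single j c) (Pi.single j c) = c * c * (2 * K.d j) := by
  have h : (Pi.single j c : ι → ℚ) = c • (Pi.single j 1 : ι → ℚ) :=
    (single_smul_eq (fun _ => c) j).symm
  rw [h, form_smul_left, form_smul_right, norm_single]
  ring

lemma refl_im_pos (j : ι) {ν : ι → ℚ} (hν : ν ∈ K.imRoots) (hp : Posv ν) :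
    Posv (K.reflection j ν) := by
  have hroot : K.reflection j ν ∈ K.imRoots := K.reflection_im j _ hν
  rcases K.root_sign _ (K.im_sub hroot) with h | h
  · exact h
  · exfalso
    -- all coordinates of ν away from j vanish
    have hcoord : ∀ p, p ≠ j → ν p = 0 := by
      intro p hpj
      have h1 : K.reflection j ν p ≤ 0 := h p
      have h2 : K.reflection j ν p = ν p := by
        rw [K.reflection_apply]
        simp [Pi.single_apply, hpj]
      have := hp p
      rw [h2] at h1
      linarith
    have hν' : ν = Pi.single j (ν j) := by
      funext p
      rcases eq_or_ne p j with rfl | hpj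
      · simp
      · rw [hcoord p hpj]; simp [Pi.single_apply, hpj]
    have hnorm := K.im_norm_nonpos ν hν
    rw [hν', single_norm_form] at hnorm
    have hd := K.d_pos j
    have hνj : ν j = 0 := by
      by_contra hne
      have hlt : 0 < ν j := (hp j).lt_of_ne (Ne.symm hne)
      nlinarith [mul_pos (mul_pos hlt hlt) (by linarith : (0:ℚ) < 2 * K.d j)]
    have : ν = 0 := by rw [hν', hνj]; simp
    exact root_ne_zero K (K.im_sub hν) this

lemma Wl_im_pos (l : List ι) {ν : ι → ℚ} (hν : ν ∈ K.imRoots) (hp : Posv ν) :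
    Posv (K.Wl l ν) := by
  induction l with
  | nil => exact hp
  | cons j l ih => rw [Wl_cons, lmul_apply]; exact refl_im_pos j (Wl_im l hν) ih

lemma Wl_reverse (l : List ι) : K.Wl l.reverse = (K.Wl l)⁻¹ := by
  induction l with
  | nil => simp
  | cons j l ih =>
      rw [List.reverse_cons, ← List.concat_eq_append, Wl_concat, ih, Wl_cons,
        mul_inv_rev, refl_inv]

lemma Wl_mem_weyl (l : List ι) : K.Wl l ∈ K.Weyl := by
  induction l with
  | nil => exact one_mem _
  | cons j l ih =>
      rw [Wl_cons]
      exact mul_mem (Subgroup.subset_closure ⟨j, rfl⟩) ih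

lemma mem_weyl_iff {g : (ι → ℚ) ≃ₗ[ℚ] (ι → ℚ)} : g ∈ K.Weyl ↔ ∃ l, K.Wl l = g := by
  constructor
  · intro hg
    refine Subgroup.closure_induction ?_ ?_ ?_ ?_ hg
    · rintro x ⟨j, rfl⟩
      exact ⟨[j], by simp [Wl]⟩
    · exact ⟨[], rfl⟩
    · rintro x y _ _ ⟨l₁, rfl⟩ ⟨l₂, rfl⟩
      exact ⟨l₁ ++ l₂, (Wl_append l₁ l₂)⟩
    · rintro x _ ⟨l, rfl⟩
      exact ⟨l.reverse, Wl_reverse l⟩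
  · rintro ⟨l, rfl⟩
    exact Wl_mem_weyl l

lemma weyl_form {g : (ι → ℚ) ≃ₗ[ℚ] (ι → ℚ)} (hg : g ∈ K.Weyl) (x y : ι → ℚ) :
    K.form (g x) (g y) = K.form x y := by
  obtain ⟨l, rfl⟩ := mem_weyl_iff.mp hg
  exact Wl_form l x y

lemma weyl_root {g : (ι → ℚ) ≃ₗ[ℚ] (ι → ℚ)} (hg : g ∈ K.Weyl) {γ : ι → ℚ}
    (h : γ ∈ K.roots) : g γ ∈ K.roots := by
  obtain ⟨l, rfl⟩ := mem_weyl_iff.mp hg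
  exact Wl_root l h

lemma weyl_real {g : (ι → ℚ) ≃ₗ[ℚ] (ι → ℚ)} (hg : g ∈ K.Weyl) {γ : ι → ℚ}
    (h : γ ∈ K.realRoots) : g γ ∈ K.realRoots := by
  obtain ⟨l, rfl⟩ := mem_weyl_iff.mp hg
  exact Wl_real l h

lemma weyl_im_pos {g : (ι → ℚ) ≃ₗ[ℚ] (ι → ℚ)} (hg : g ∈ K.Weyl) {ν : ι → ℚ}
    (h : ν ∈ K.imRoots) (hp : Posv ν) : Posv (g ν) := by
  obtain ⟨l, rfl⟩ := mem_weyl_iff.mp hg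
  exact Wl_im_pos l h hp
lemma conj_refl (l : List ι) (j m : ι) (h : K.Wl l (Pi.single j 1) = Pi.single m 1) :
    K.Wl l * K.reflection j = K.reflection m * K.Wl l := by
  apply LinearEquiv.ext
  intro x
  rw [lmul_apply, lmul_apply, K.reflection_apply, K.reflection_apply, map_sub, map_smul, h]
  have hpair : (K.pairing (Pi.single m 1) (K.Wl l x) : ℚ) = (K.pairing (Pi.single j 1) x : ℚ) := by
    apply pairing_eq_of K (K.simple_real m)
    have h1 : K.form (Pi.single m 1) (K.Wl l x) = K.form (Pi.single j 1) x := by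
      rw [← h, Wl_form]
    have h2 : K.form (Pi.single m 1) (Pi.single m 1)
        = K.form (Pi.single j 1) (Pi.single j 1) := by
      rw [← h, Wl_form]
    rw [h1, h2]
    exact (pairing_spec K (K.simple_real j) x).symm
  rw [hpair]

lemma scan : ∀ (l : List ι) (π : ι → ℚ), π ∈ K.realRoots → Posv π → Negv (K.Wl l π) →
    ∃ l₁ j l₂, l = l₁ ++ j :: l₂ ∧ K.Wl l₂ π = Pi.single j 1 := by
  intro l
  induction l with
  | nil =>
      intro π hre hp hn
      exact absurd (posv_negv_eq_zero hp (by simpa using hn)) (root_ne_zero K (K.real_sub hre))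
  | cons j l ih =>
      intro π hre hp hn
      have hπ' : K.Wl l π ∈ K.realRoots := Wl_real l hre
      have hnc : Negv (K.reflection j (K.Wl l π)) := by
        intro p
        have := hn p
        rwa [Wl_cons, lmul_apply] at this
      rcases K.root_sign _ (K.real_sub hπ') with hpos | hneg
      · by_cases hej : K.Wl l π = Pi.single j 1
        · exact ⟨[], j, l, rfl, hej⟩
        · exfalso
          have hposr : Posv (K.reflection j (K.Wl l π)) := K.reflection_pos j _ hπ' hpos hej
          have h0 := posv_negv_eq_zero hposr hnc
          exact root_ne_zero K (K.reflection_root j _ (K.real_sub hπ')) h0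
      · obtain ⟨l₁, j₂, l₂, heq, hsp⟩ := ih π hre hp hneg
        exact ⟨j :: l₁, j₂, l₂, by rw [heq]; rfl, hsp⟩

/-- Key stabilizer theorem: if `w ∈ W` maps the antidominant `δ` to an antidominant
vector, then `wδ = δ` and `w` lies in the parabolic generated by reflections fixing `δ`. -/
lemma stab_aux (δ ν : ι → ℚ) (hδ : ∀ q, K.form (Pi.single q 1) δ ≤ 0)
    (hν : ∀ q, K.form (Pi.single q 1) ν ≤ 0) :
    ∀ n (l : List ι), l.length = n → K.Wl l δ = ν →
      K.Wl l δ = δ ∧ K.Wl l ∈ K.ParabolicWeyl {q | K.form (Pi.single q 1) δ = 0} := by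
  intro n
  induction n using Nat.strong_induction_on with
  | _ n ih =>
  intro l hlen hlδ
  rcases List.eq_nil_or_concat l with rfl | ⟨l', j, rfl⟩
  · exact ⟨by simp [lone_apply], one_mem _⟩
  · have hvconcat : K.Wl (l'.concat j) = K.Wl l' * K.reflection j := Wl_concat l' j
    have hl'v : K.Wl l' = K.Wl (l'.concat j) * K.reflection j := by
      rw [hvconcat, mul_assoc, refl_mul_self, mul_one]
    have hvre : K.Wl (l'.concat j) (Pi.single j 1) ∈ K.realRoots :=
      Wl_real _ (K.simple_real j)
    rcases K.root_sign _ (K.real_sub hvre) with hpos | hneg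
    · -- collapse case
      have hρ : Negv (K.Wl l' (Pi.single j 1)) := by
        have : K.Wl l' (Pi.single j 1)
            = -(K.Wl (l'.concat j) (Pi.single j 1)) := by
          rw [hl'v, lmul_apply, refl_single, map_neg]
        rw [this]
        exact negv_neg hpos
      obtain ⟨l₁, j₂, l₂, hsplit, hconj⟩ := scan l' (Pi.single j 1) (K.simple_real j)
        (posv_single j) hρ
      have hcj := conj_refl l₂ j j₂ hconj
      have hveq : K.Wl (l'.concat j) = K.Wl (l₁ ++ l₂) := by
        rw [hvconcat, hsplit, Wl_append, Wl_cons, Wl_append, mul_assoc, mul_assoc, hcj,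
          ← mul_assoc (K.reflection j₂), refl_mul_self, one_mul]
      have hlength : (l₁ ++ l₂).length < n := by
        have h1 : (l'.concat j).length = n := hlen
        rw [List.length_concat] at h1
        have h2 : l'.length = l₁.length + (l₂.length + 1) := by
          rw [hsplit]; simp
        simp only [List.length_append]
        omega
      obtain ⟨h1, h2⟩ := ih _ hlength (l₁ ++ l₂) rfl (by rw [← hveq]; exact hlδ)
      rw [hveq]
      exact ⟨h1, h2⟩
    · -- descent case
      have h1 : K.form (Pi.single j 1) δ = 0 := by
        have e1 : K.form (Pi.single j 1) δ
            = K.form (K.Wl (l'.concat j) (Pi.single j 1)) ν := by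
          rw [← hlδ, Wl_form]
        have e2 : 0 ≤ K.form (K.Wl (l'.concat j) (Pi.single j 1)) ν := by
          rw [form_expand_left]
          apply Finset.sum_nonneg
          intro p _
          have := mul_nonneg (neg_nonneg.mpr (hneg p)) (neg_nonneg.mpr (hν p))
          nlinarith [this]
        have e3 := hδ j
        rw [e1] at e3 ⊢
        linarith
      have hpair : (K.pairing (Pi.single j 1) δ : ℚ) = 0 :=
        pairing_eq_of K (K.simple_real j) δ 0 (by rw [h1]; ring)
      have hsδ : K.reflection j δ = δ := by
        rw [K.reflection_apply, hpair]
        simp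
      have hl'δ : K.Wl l' δ = ν := by
        rw [hl'v, lmul_apply, hsδ, hlδ]
      have hlen' : l'.length < n := by
        have := hlen
        rw [List.length_concat] at this
        omega
      obtain ⟨hfix, hmem⟩ := ih _ hlen' l' rfl hl'δ
      constructor
      · rw [hvconcat, lmul_apply, hsδ, hfix]
      · rw [hvconcat]
        exact mul_mem hmem (Subgroup.subset_closure ⟨j, h1, rfl⟩)

lemma stab {g : (ι → ℚ) ≃ₗ[ℚ] (ι → ℚ)} (hg : g ∈ K.Weyl) (δ ν : ι → ℚ)
    (hδ : ∀ q, K.form (Pi.single q 1) δ ≤ 0) (hν : ∀ q, K.form (Pi.single q 1) ν ≤ 0)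
    (h : g δ = ν) :
    g δ = δ ∧ g ∈ K.ParabolicWeyl {q | K.form (Pi.single q 1) δ = 0} := by
  obtain ⟨l, rfl⟩ := mem_weyl_iff.mp hg
  exact stab_aux δ ν hδ hν l.length l rfl h
lemma gcm_offdiag_nonpos {i j : ι} (h : i ≠ j) : (K.A i j : ℚ) ≤ 0 := by
  exact_mod_cast K.isGCM.2.1 i j h

lemma gcm_sym_ne {i j : ι} (h : K.A i j ≠ 0) : K.A j i ≠ 0 :=
  fun h0 => h (K.isGCM.2.2 j i h0)

section Affine

variable {Y : Set ι} {δ : ι → ℚ} (haff : K.IsAffineNullRoot Y δ)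
include haff

lemma aff_pos {q : ι} (hq : q ∈ Y) : 0 < δ q :=
  (haff.2.1 q).lt_of_ne (Ne.symm ((haff.1 q).mpr hq))

lemma aff_zero {q : ι} (hq : q ∉ Y) : δ q = 0 := by
  by_contra h
  exact hq ((haff.1 q).mp h)

lemma aff_orth {q : ι} (hq : q ∈ Y) : K.form (Pi.single q 1) δ = 0 := by
  rw [K.form_symm]
  exact haff.2.2.2.2.1 q hq

lemma aff_expand (q : ι) :
    K.form (Pi.single q 1) δ = ∑ p, δ p * (K.d q * (K.A q p : ℚ)) := by
  rw [form_expand_right]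
  exact Finset.sum_congr rfl fun p _ => by rw [form_single_single]

lemma aff_antidom (q : ι) : K.form (Pi.single q 1) δ ≤ 0 := by
  by_cases hq : q ∈ Y
  · rw [aff_orth haff hq]
  · rw [aff_expand haff q]
    apply Finset.sum_nonpos
    intro p _
    by_cases hp : δ p = 0
    · rw [hp]; simp
    · have hpY : p ∈ Y := (haff.1 p).mp hp
      have hpq : q ≠ p := fun h => hq (h ▸ hpY)
      have h1 : (K.A q p : ℚ) ≤ 0 := gcm_offdiag_nonpos hpq
      have h2 : 0 < δ p := aff_pos haff hpY
      have h3 := K.d_pos q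
      exact mul_nonpos_of_nonneg_of_nonpos h2.le
        (mul_nonpos_of_nonneg_of_nonpos h3.le h1)

lemma aff_strict {q : ι} (hq : q ∉ Y) {q₀ : ι} (hq₀ : q₀ ∈ Y) (hA : K.A q q₀ ≠ 0) :
    K.form (Pi.single q 1) δ < 0 := by
  rw [aff_expand haff q]
  have h0 : (0 : ℚ) = ∑ _p : ι, (0 : ℚ) := by simp
  rw [h0]
  apply Finset.sum_lt_sum
  · intro p _
    by_cases hp : δ p = 0
    · rw [hp]; simp
    · have hpY : p ∈ Y := (haff.1 p).mp hp
      have hpq : q ≠ p := fun h => hq (h ▸ hpY)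
      have h1 : (K.A q p : ℚ) ≤ 0 := gcm_offdiag_nonpos hpq
      have h2 : 0 < δ p := aff_pos haff hpY
      have h3 := K.d_pos q
      exact mul_nonpos_of_nonneg_of_nonpos h2.le
        (mul_nonpos_of_nonneg_of_nonpos h3.le h1)
  · refine ⟨q₀, Finset.mem_univ _, ?_⟩
    have hpq : q ≠ q₀ := fun h => hq (h ▸ hq₀)
    have h1 : (K.A q q₀ : ℚ) < 0 :=
      (gcm_offdiag_nonpos hpq).lt_of_ne (by exact_mod_cast hA)
    have h2 : 0 < δ q₀ := aff_pos haff hq₀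
    have h3 := K.d_pos q
    exact mul_neg_of_pos_of_neg h2 (mul_neg_of_pos_of_neg h3 h1)

lemma aff_zero_iff (q : ι) :
    K.form (Pi.single q 1) δ = 0 ↔ q ∈ Y ∪ K.Perp Y := by
  constructor
  · intro h
    by_cases hq : q ∈ Y
    · exact Or.inl hq
    · refine Or.inr ⟨hq, ?_⟩
      intro q₀ hq₀
      by_contra hA
      exact absurd h (aff_strict haff hq hq₀ hA).ne
  · intro h
    rcases h with hq | hq
    · exact aff_orth haff hq
    · rw [aff_expand haff q]
      apply Finset.sum_eq_zero
      intro p _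
      by_cases hp : δ p = 0
      · rw [hp]; ring
      · have hpY : p ∈ Y := (haff.1 p).mp hp
        rw [hq.2 p hpY]
        push_cast
        ring

/-- a real root orthogonal to δ is supported in `Y` or in `Y⊥`. -/
lemma supp_dichotomy {γ : ι → ℚ} (hγre : γ ∈ K.realRoots) (h0 : K.form γ δ = 0) :
    (∀ p, γ p ≠ 0 → p ∈ Y) ∨ (∀ p, γ p ≠ 0 → p ∈ K.Perp Y) := by
  have hsub : ∀ p, γ p ≠ 0 → p ∈ Y ∪ K.Perp Y := by
    have hexp : ∑ p, γ p * K.form (Pi.single p 1) δ = 0 := by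
      rw [← form_expand_left]; exact h0
    rcases K.root_sign γ (K.real_sub hγre) with hpos | hneg
    · intro p hp
      by_contra hout
      have hterm : ∀ r ∈ Finset.univ, γ r * K.form (Pi.single r 1) δ ≤ 0 := by
        intro r _
        exact mul_nonpos_of_nonneg_of_nonpos (hpos r) (aff_antidom haff r)
      have hzero := (Finset.sum_eq_zero_iff_of_nonpos hterm).mp hexp p (Finset.mem_univ p)
      have hne : K.form (Pi.single p 1) δ ≠ 0 := fun hc => hout ((aff_zero_iff haff p).mp hc)
      exact hne (by
        rcases mul_eq_zero.mp hzero with h | h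
        · exact absurd h hp
        · exact h)
    · intro p hp
      by_contra hout
      have hterm : ∀ r ∈ Finset.univ, 0 ≤ γ r * K.form (Pi.single r 1) δ := by
        intro r _
        nlinarith [mul_nonneg (neg_nonneg.mpr (hneg r)) (neg_nonneg.mpr (aff_antidom haff r))]
      have hzero := (Finset.sum_eq_zero_iff_of_nonneg hterm).mp hexp p (Finset.mem_univ p)
      have hne : K.form (Pi.single p 1) δ ≠ 0 := fun hc => hout ((aff_zero_iff haff p).mp hc)
      exact hne (by
        rcases mul_eq_zero.mp hzero with h | h
        · exact absurd h hp
        · exact h)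
  by_cases hY : ∃ p, γ p ≠ 0 ∧ p ∈ Y
  · left
    intro p' hp'
    by_contra hp'Y
    obtain ⟨p, hp, hpY⟩ := hY
    obtain ⟨a, ha, b, hb, hγa, hγb, hab⟩ :=
      K.root_connected γ (K.real_sub hγre) Y ⟨p, hpY, hp⟩ ⟨p', hp'Y, hp'⟩
    have hbP : b ∈ K.Perp Y := by
      rcases hsub b hγb with h | h
      · exact absurd h hb
      · exact h
    exact hab (K.isGCM.2.2 b a (hbP.2 a ha))
  · right
    intro p hp
    rcases hsub p hp with h | h
    · exact absurd ⟨p, hp, h⟩ hY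
    · exact h

/-- positive semidefiniteness on the affine subdiagram: an isotropic vector
supported in `Y` is a multiple of `δ`. -/
lemma psd {x : ι → ℚ} (hsupp : ∀ p, x p ≠ 0 → p ∈ Y) (hiso : K.form x x = 0) :
    ∃ t : ℚ, x = t • δ := by
  classical
  set t : ι → ℚ := fun p => x p / δ p with ht
  have hx : ∀ p, x p = t p * δ p := by
    intro p
    by_cases hp : p ∈ Y
    · have hδp : δ p ≠ 0 := (haff.1 p).mpr hp
      rw [ht]
      field_simp
    · have h1 : x p = 0 := by by_contra h; exact hp (hsupp p h)
      have h2 : δ p = 0 := aff_zero haff hp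
      rw [h1, ht]
      simp [h1, h2]
  set S : ι → ι → ℚ :=
    fun q p => δ q * δ p * K.form (Pi.single q 1) (Pi.single p 1) with hS
  have hrow : ∀ q, ∑ p, S q p = 0 := by
    intro q
    have h1 : ∑ p, S q p = δ q * K.form (Pi.single q 1) δ := by
      rw [form_expand_right, Finset.mul_sum]
      exact Finset.sum_congr rfl fun p _ => by rw [hS]; ring
    rw [h1]
    by_cases hq : q ∈ Y
    · rw [aff_orth haff hq, mul_zero]
    · rw [aff_zero haff hq, zero_mul]
  have hsymm : ∀ q p, S q p = S p q := by
    intro q p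
    rw [hS]
    simp only
    rw [form_single_single, form_single_single]
    linear_combination (δ q * δ p) * K.d_symm q p
  have hform : K.form x x = ∑ q, ∑ p, S q p * (t q * t p) := by
    rw [form_expand_left]
    refine Finset.sum_congr rfl fun q _ => ?_
    rw [form_expand_right, Finset.mul_sum]
    refine Finset.sum_congr rfl fun p _ => ?_
    rw [hx q, hx p, hS]
    ring
  have hR : ∑ q, ∑ p, S q p * (t q - t p)^2 = 0 := by
    have e1 : ∑ q, ∑ p, S q p * (t q - t p)^2
        = (∑ q, ∑ p, S q p * t q^2) + (∑ q, ∑ p, S q p * t p^2)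
          - 2 * ∑ q, ∑ p, S q p * (t q * t p) := by
      rw [← Finset.sum_add_distrib, Finset.mul_sum, ← Finset.sum_sub_distrib]
      refine Finset.sum_congr rfl fun q _ => ?_
      rw [← Finset.sum_add_distrib, Finset.mul_sum, ← Finset.sum_sub_distrib]
      refine Finset.sum_congr rfl fun p _ => ?_
      ring
    have e2 : (∑ q, ∑ p, S q p * t q^2) = 0 := by
      apply Finset.sum_eq_zero
      intro q _
      rw [← Finset.sum_mul, hrow q, zero_mul]
    have e3 : (∑ q, ∑ p, S q p * t p^2) = 0 := by
      rw [Finset.sum_comm]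
      apply Finset.sum_eq_zero
      intro p _
      have : ∑ q, S q p * t p ^ 2 = (∑ q, S p q) * t p ^ 2 := by
        rw [Finset.sum_mul]
        exact Finset.sum_congr rfl fun q _ => by rw [hsymm q p]
      rw [this, hrow p, zero_mul]
    rw [e1, e2, e3, ← hform, hiso]
    ring
  have hterm_nonpos : ∀ q, ∀ p, S q p * (t q - t p)^2 ≤ 0 := by
    intro q p
    rcases eq_or_ne q p with rfl | hqp
    · simp
    · have h1 : S q p ≤ 0 := by
        rw [hS]
        simp only
        rw [form_single_single]
        have := gcm_offdiag_nonpos (K := K) hqp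
        have h2 := haff.2.1 q
        have h3 := haff.2.1 p
        have h4 := K.d_pos q
        exact mul_nonpos_of_nonneg_of_nonpos (mul_nonneg h2 h3)
          (mul_nonpos_of_nonneg_of_nonpos h4.le this)
      nlinarith [sq_nonneg (t q - t p)]
  have hzero : ∀ q p, S q p * (t q - t p)^2 = 0 := by
    intro q p
    have houter : ∀ q' ∈ Finset.univ, (∑ p', S q' p' * (t q' - t p')^2) ≤ 0 :=
      fun q' _ => Finset.sum_nonpos fun p' _ => hterm_nonpos q' p'
    have hin := (Finset.sum_eq_zero_iff_of_nonpos houter).mp hR q (Finset.mem_univ q)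
    exact (Finset.sum_eq_zero_iff_of_nonpos
      (fun p' _ => hterm_nonpos q p')).mp hin p (Finset.mem_univ p)
  have hteq : ∀ q p, S q p ≠ 0 → t q = t p := by
    intro q p hSne
    rcases mul_eq_zero.mp (hzero q p) with h | h
    · exact absurd h hSne
    · have := pow_eq_zero_iff (n := 2) (by norm_num) |>.mp h
      linarith [this]
  have hδroot : δ ∈ K.roots := K.im_sub haff.2.2.2.1
  obtain ⟨p₀, hp₀⟩ : ∃ p₀, δ p₀ ≠ 0 := by
    by_contra h
    push_neg at h
    exact root_ne_zero K hδroot (funext h)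
  have hp₀Y : p₀ ∈ Y := (haff.1 p₀).mp hp₀
  have hconst : ∀ p, p ∈ Y → t p = t p₀ := by
    by_contra h
    push_neg at h
    obtain ⟨p₁, hp₁Y, hne⟩ := h
    obtain ⟨a, has, b, hbs, hδa, hδb, hab⟩ :=
      K.root_connected δ hδroot {p | t p = t p₀} ⟨p₀, rfl, hp₀⟩
        ⟨p₁, hne, (haff.1 p₁).mpr hp₁Y⟩
    have hSab : S a b ≠ 0 := by
      rw [hS]
      simp only
      rw [form_single_single]
      have h4 := (K.d_pos a).ne'
      have h5 : (K.A a b : ℚ) ≠ 0 := by exact_mod_cast hab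
      exact mul_ne_zero (mul_ne_zero hδa hδb) (mul_ne_zero h4 h5)
    have hb' : t b = t p₀ := (hteq a b hSab).symm.trans has
    exact hbs hb'
  refine ⟨t p₀, funext fun p => ?_⟩
  by_cases hp : p ∈ Y
  · rw [hx p, hconst p hp]
    simp [Pi.smul_apply, smul_eq_mul]
  · have h1 : x p = 0 := by by_contra h; exact hp (hsupp p h)
    have h2 : δ p = 0 := aff_zero haff hp
    rw [h1]
    simp [Pi.smul_apply, smul_eq_mul, h2]

end Affine
lemma row_zero_of_orth {δ₀ : ι → ℚ} (horth : ∀ q, K.form δ₀ (Pi.single q 1) = 0) (i : ι) :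
    ∑ j, (K.A i j : ℚ) * δ₀ j = 0 := by
  have h1 : K.form (Pi.single i 1) δ₀ = K.d i * ∑ j, (K.A i j : ℚ) * δ₀ j := by
    rw [form_expand_right, Finset.mul_sum]
    refine Finset.sum_congr rfl fun j _ => ?_
    rw [form_single_single]
    ring
  have h0 : K.form (Pi.single i 1) δ₀ = 0 := by rw [K.form_symm]; exact horth i
  rw [h0] at h1
  have hd := (K.d_pos i).ne'
  field_simp at h1
  rcases mul_eq_zero.mp (by linarith [h1] : K.d i * ∑ j, (K.A i j : ℚ) * δ₀ j = 0) with h | h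
  · exact absurd h hd
  · exact h

lemma conn {δ₀ : ι → ℚ} (hroot : δ₀ ∈ K.roots) (hfull : ∀ q, δ₀ q ≠ 0) {s : Set ι}
    (h1 : ∃ i, i ∈ s) (h2 : ∃ j, j ∉ s) : ∃ i ∈ s, ∃ j ∉ s, K.A i j ≠ 0 := by
  obtain ⟨i, hi⟩ := h1
  obtain ⟨j, hj⟩ := h2
  obtain ⟨a, ha, b, hb, _, _, hab⟩ :=
    K.root_connected δ₀ hroot s ⟨i, hi, hfull i⟩ ⟨j, hj, hfull j⟩
  exact ⟨a, ha, b, hb, hab⟩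

lemma ker_trivial {δ₀ : ι → ℚ} (hroot : δ₀ ∈ K.roots) (hfull : ∀ q, δ₀ q ≠ 0)
    {z : ι → ℚ} (hz : ∀ i, ∑ j, (K.A i j : ℚ) * z j = 0) (hnn : Posv z)
    {i₀ : ι} (h0 : z i₀ = 0) : z = 0 := by
  by_contra hne
  obtain ⟨j₁, hj₁⟩ : ∃ j, z j ≠ 0 := by
    by_contra h
    push_neg at h
    exact hne (funext h)
  obtain ⟨a, ha, b, hb, hab⟩ :=
    conn hroot hfull (s := {i | z i = 0}) ⟨i₀, h0⟩ ⟨j₁, hj₁⟩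
  have hrow := hz a
  have hterm : ∀ j ∈ Finset.univ, (K.A a j : ℚ) * z j ≤ 0 := by
    intro j _
    by_cases hzj : z j = 0
    · rw [hzj]; simp
    · have hja : j ≠ a := fun h => hzj (h ▸ ha)
      have h1 : (K.A a j : ℚ) ≤ 0 := gcm_offdiag_nonpos (Ne.symm hja)
      have h2 : 0 < z j := (hnn j).lt_of_ne (Ne.symm hzj)
      exact mul_nonpos_of_nonpos_of_nonneg h1 h2.le
  have hlt : ∑ j, (K.A a j : ℚ) * z j < 0 := by
    have h0' : (0 : ℚ) = ∑ _j : ι, (0 : ℚ) := by simp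
    rw [h0']
    apply Finset.sum_lt_sum
    · intro j _; simpa using hterm j (Finset.mem_univ j)
    · refine ⟨b, Finset.mem_univ b, ?_⟩
      have hba : b ≠ a := fun h => hb (h ▸ ha)
      have h1 : (K.A a b : ℚ) < 0 :=
        (gcm_offdiag_nonpos (Ne.symm hba)).lt_of_ne (by exact_mod_cast hab)
      have h2 : 0 < z b := (hnn b).lt_of_ne (Ne.symm hb)
      exact mul_neg_of_neg_of_pos h1 h2
  rw [hrow] at hlt
  exact absurd hlt (lt_irrefl 0)
lemma sum_single_smul_family {M : Type*} [AddCommMonoid M] [Module ℚ M]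
    (f : ι → M) (i : ι) : ∑ j, (Pi.single i (1:ℚ) : ι → ℚ) j • f j = f i := by
  rw [Finset.sum_eq_single i]
  · simp
  · intro j _ hj
    simp [Pi.single_apply, hj]
  · intro h
    exact absurd (Finset.mem_univ i) h

end KacMoodyRootSystem

namespace KacMoodyRootSystem

variable {ιA ιB : Type} [Fintype ιA] [DecidableEq ιA] [Fintype ιB] [DecidableEq ιB]
    (KA : KacMoodyRootSystem ιA) (KB : KacMoodyRootSystem ιB)
    (δB : ιB → ℚ) (β : ιB → (ιA → ℚ))

section PiSys

variable (hBaff : KB.IsAffineNullRoot Set.univ δB) (hSig : KA.IsPiSysOfType β KB.A)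
include hBaff hSig

lemma piSys_form_eq (i j : ιB) :
    KA.form (β i) (β j) = KA.form (β i) (β i) / 2 * (KB.A i j : ℚ) := by
  have h1 := pairing_spec KA (hSig.1.2.1 i) (β j)
  rw [hSig.2 i j] at h1
  have := (KA.real_norm_pos _ (hSig.1.2.1 i))
  field_simp
  linarith [h1]

lemma piSys_form_q (i : ιB) (x : ιB → ℚ) :
    KA.form (β i) (∑ j, x j • β j)
      = KA.form (β i) (β i) / 2 * ∑ j, (KB.A i j : ℚ) * x j := by
  rw [form_sum_right, Finset.mul_sum]
  refine Finset.sum_congr rfl fun j _ => ?_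
  rw [form_smul_right, piSys_form_eq KA KB δB β hBaff hSig i j]
  ring

lemma piSys_pairing_q (i : ιB) (x : ιB → ℚ) :
    (KA.pairing (β i) (∑ j, x j • β j) : ℚ) = ∑ j, (KB.A i j : ℚ) * x j := by
  apply pairing_eq_of KA (hSig.1.2.1 i)
  rw [piSys_form_q KA KB δB β hBaff hSig i x]
  ring

lemma deltaB_row (i : ιB) : ∑ j, (KB.A i j : ℚ) * δB j = 0 :=
  row_zero_of_orth (fun q => hBaff.2.2.2.2.1 q (Set.mem_univ q)) i

lemma piSys_form_beta_qdelta (i : ιB) :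
    KA.form (β i) (∑ j, δB j • β j) = 0 := by
  rw [piSys_form_q KA KB δB β hBaff hSig i δB, deltaB_row KA KB δB β hBaff hSig i]
  ring

lemma piSys_qdelta_iso :
    KA.form (∑ j, δB j • β j) (∑ j, δB j • β j) = 0 := by
  rw [form_sum_left]
  apply Finset.sum_eq_zero
  intro i _
  rw [form_smul_left, piSys_form_beta_qdelta KA KB δB β hBaff hSig i]
  ring

lemma deltaB_full (q : ιB) : δB q ≠ 0 := (hBaff.1 q).mpr (Set.mem_univ q)

lemma deltaB_ge_one (q : ιB) : 1 ≤ δB q := by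
  obtain ⟨k, hk⟩ := hBaff.2.2.1 q
  have h1 : 0 < δB q := (hBaff.2.1 q).lt_of_ne
    (Ne.symm (deltaB_full KA KB δB β hBaff hSig q))
  rw [hk] at h1 ⊢
  have : 0 < k := by exact_mod_cast h1
  have : 1 ≤ k := this
  exact_mod_cast this

lemma nonempty_iB : Nonempty ιB := by
  by_contra h
  have hemp : IsEmpty ιB := not_nonempty_iff.mp h
  have : δB = 0 := funext fun q => (hemp.false q).elim
  exact root_ne_zero KB (KB.im_sub hBaff.2.2.2.1) this

end PiSys

theorem exists_isotropic
    (hBaff : KB.IsAffineNullRoot Set.univ δB) (hli : LinearIndependent ℚ β)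
    (hSig : KA.IsPiSysOfType β KB.A) :
    ∃ μ₀ ∈ KA.roots, ∃ c : ℚ, 0 < c ∧ (∑ j, δB j • β j) = c • μ₀ ∧ KA.form μ₀ μ₀ = 0 := by
  classical
  have hβre : ∀ i, β i ∈ KA.realRoots := hSig.1.2.1
  have hδBroot : δB ∈ KB.roots := KB.im_sub hBaff.2.2.2.1
  have hδBfull := deltaB_full KA KB δB β hBaff hSig
  have hδB1 := deltaB_ge_one KA KB δB β hBaff hSig
  have hδBnn : ∀ q, (0:ℚ) ≤ δB q := hBaff.2.1
  have hBrow := deltaB_row KA KB δB β hBaff hSig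
  have hiB : Nonempty ιB := nonempty_iB KA KB δB β hBaff hSig
  have hq_inj : ∀ x y : ιB → ℚ,
      (∑ j, x j • β j) = ∑ j, y j • β j → x = y := by
    intro x y hxy
    have h0 : ∑ j, (x j - y j) • β j = 0 := by
      have : ∑ j, (x j - y j) • β j = (∑ j, x j • β j) - ∑ j, y j • β j := by
        rw [← Finset.sum_sub_distrib]
        exact Finset.sum_congr rfl fun j _ => sub_smul _ _ _
      rw [this, hxy, sub_self]
    have := Fintype.linearIndependent_iff.mp hli (fun j => x j - y j) h0
    funext j
    have hj := this j
    linarith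
  -- floor data
  set D : ιB → ℕ := fun j => ⌊δB j⌋₊ with hDdef
  have hD : ∀ j, (D j : ℚ) = δB j := by
    intro j
    obtain ⟨k, hk⟩ := hBaff.2.2.1 j
    have hk0 : (0:ℤ) ≤ k := by
      have := hδBnn j
      rw [hk] at this
      exact_mod_cast this
    have hkn : (k:ℚ) = ((k.toNat : ℕ) : ℚ) := by
      exact_mod_cast congrArg (Int.cast : ℤ → ℚ) (Int.toNat_of_nonneg hk0).symm
    show ((⌊δB j⌋₊ : ℚ)) = δB j
    rw [hk, hkn, Nat.floor_natCast]
  set M : ℕ := ∑ j, D j with hM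
  set P : ℕ → Prop := fun n => ∃ x : ιB → ℕ, (∀ j, x j ≤ D j) ∧
    ((∑ j, ((x j : ℚ)) • β j) ∈ KA.roots) ∧ (∑ j, x j = n) with hP
  obtain ⟨j₀⟩ := hiB
  have hD1 : 1 ≤ D j₀ := by
    have := hδB1 j₀
    rw [← hD j₀] at this
    exact_mod_cast this
  have hP1 : P 1 := by
    refine ⟨Pi.single j₀ 1, ?_, ?_, ?_⟩
    · intro j
      rcases eq_or_ne j j₀ with rfl | hj
      · simpa using hD1
      · simp [Pi.single_apply, hj]
    · have : (∑ j, (((Pi.single j₀ 1 : ιB → ℕ) j : ℚ)) • β j) = β j₀ := by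
        rw [Finset.sum_eq_single j₀]
        · simp
        · intro j _ hj
          simp [Pi.single_apply, hj]
        · intro h
          exact absurd (Finset.mem_univ j₀) h
      rw [this]
      exact KA.real_sub (hβre j₀)
    · simp [Pi.single_apply]
  have h1M : 1 ≤ M := le_trans hD1 (Finset.single_le_sum (fun j _ => Nat.zero_le _)
    (Finset.mem_univ j₀))
  letI : DecidablePred P := Classical.decPred P
  set nstar : ℕ := Nat.findGreatest P M with hnstar
  have hPn : P nstar := Nat.findGreatest_spec h1M hP1
  have hn1 : 1 ≤ nstar := Nat.le_findGreatest h1M hP1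
  obtain ⟨x, hxD, hxroot, hxht⟩ := hPn
  set xq : ιB → ℚ := fun j => ((x j : ℚ)) with hxq
  have hxle : ∀ j, xq j ≤ δB j := by
    intro j
    show ((x j : ℚ)) ≤ δB j
    rw [← hD j]
    exact_mod_cast hxD j
  have hxnn : ∀ j, (0:ℚ) ≤ xq j := fun j => by positivity
  set γ : ιA → ℚ := ∑ j, xq j • β j with hγ
  have hmaxroot : ∀ i, x i < D i → (γ + β i) ∉ KA.roots := by
    intro i hi hroot
    set x' : ιB → ℕ := x + Pi.single i 1 with hx'
    have hPn1 : P (nstar + 1) := by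
      refine ⟨x', ?_, ?_, ?_⟩
      · intro j
        rcases eq_or_ne j i with rfl | hj
        · rw [hx']
          simp only [Pi.add_apply, Pi.single_eq_same]
          omega
        · rw [hx']
          simp [Pi.single_apply, hj]
          exact hxD j
      · have hsum : (∑ j, ((x' j : ℚ)) • β j) = γ + β i := by
          rw [hγ]
          have : ∀ j, ((x' j : ℚ)) • β j
              = xq j • β j + ((Pi.single i 1 : ιB → ℕ) j : ℚ) • β j := by
            intro j
            have hxj : ((x' j : ℚ)) = xq j + ((Pi.single i 1 : ιB → ℕ) j : ℚ) := by
              show (((x + Pi.single i 1 : ιB → ℕ) j : ℚ)) = _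
              simp only [Pi.add_apply]
              push_cast
              rfl
            rw [hxj, add_smul]
          rw [Finset.sum_congr rfl (fun j _ => this j), Finset.sum_add_distrib]
          congr 1
          rw [Finset.sum_eq_single i]
          · simp
          · intro j _ hj
            simp [Pi.single_apply, hj]
          · intro h
            exact absurd (Finset.mem_univ i) h
        rw [hsum]
        exact hroot
      · show ∑ j, (x + Pi.single i 1 : ιB → ℕ) j = nstar + 1
        simp only [Pi.add_apply]
        rw [Finset.sum_add_distrib]
        have : ∑ j, (Pi.single i 1 : ιB → ℕ) j = 1 := by simp [Pi.single_apply]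
        rw [hxht, this]
    have hle : nstar + 1 ≤ M := by
      obtain ⟨x'', hx''D, _, hx''ht⟩ := hPn1
      rw [← hx''ht, hM]
      exact Finset.sum_le_sum fun j _ => hx''D j
    exact Nat.findGreatest_is_greatest (by omega) hle hPn1
  set Z : ιB → ℚ := fun i => ∑ j, (KB.A i j : ℚ) * xq j with hZ
  have hZpair : ∀ i, (KA.pairing (β i) γ : ℚ) = Z i := by
    intro i
    rw [hγ, hZ]
    exact piSys_pairing_q KA KB δB β hBaff hSig i xq
  have hZform : ∀ i, KA.form (β i) γ = KA.form (β i) (β i) / 2 * Z i := by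
    intro i
    rw [hγ, hZ]
    exact piSys_form_q KA KB δB β hBaff hSig i xq
  have hZsome : ∀ i, xq i ≠ δB i → 0 ≤ Z i := by
    intro i hnei
    have hiD : x i < D i := by
      have h1 := hxle i
      have h2 : (x i : ℚ) < (D i : ℚ) := by
        rw [hD i]
        exact (h1).lt_of_ne hnei
      exact_mod_cast h2
    by_cases h1 : γ = β i
    · have hxe : xq = Pi.single i 1 := by
        apply hq_inj
        rw [← hγ, h1, sum_single_smul_family]
      rw [hZ]
      simp only
      have : ∑ j, (KB.A i j : ℚ) * xq j = (KB.A i i : ℚ) := by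
        rw [hxe, Finset.sum_eq_single i]
        · simp
        · intro j _ hj
          simp [Pi.single_apply, hj]
        · intro h
          exact absurd (Finset.mem_univ i) h
      rw [this, KB.isGCM.1 i]
      norm_num
    · by_cases h2 : γ = -β i
      · exfalso
        have hxe : xq = -Pi.single i 1 := by
          apply hq_inj
          rw [← hγ, h2]
          have : ∑ j, (-Pi.single i 1 : ιB → ℚ) j • β j
              = -∑ j, (Pi.single i 1 : ιB → ℚ) j • β j := by
            rw [← Finset.sum_neg_distrib]
            refine Finset.sum_congr rfl fun j _ => ?_
            simp [neg_smul]
          rw [this, sum_single_smul_family]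
        have : xq i = -1 := by
          rw [hxe]
          simp
        have h3 := hxnn i
        rw [this] at h3
        linarith
      · obtain ⟨p, q, hpq, hiff⟩ := KA.rootString (β i) (hβre i) γ hxroot h1 h2
        have hnot : γ + ((1:ℤ):ℚ) • β i ∉ KA.roots := by
          push_cast
          rw [one_smul]
          exact hmaxroot i hiD
        have hq0 : ¬((1:ℤ) ≤ (q:ℤ)) := by
          intro hq1
          exact hnot ((hiff 1).mpr ⟨by omega, hq1⟩)
        have hqz : q = 0 := by omega
        rw [hqz] at hpq
        have : KA.pairing (β i) γ = (p : ℤ) := by omega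
        rw [← hZpair i, this]
        positivity
  have hxpos : ∀ i, 0 < xq i := by
    have hex : ∃ i, xq i ≠ 0 := by
      by_contra h
      push_neg at h
      have : ∑ j, x j = 0 := by
        apply Finset.sum_eq_zero
        intro j _
        have hzz : ((x j : ℚ)) = 0 := h j
        exact_mod_cast hzz
      omega
    intro i
    by_contra hno
    have hxi0 : xq i = 0 := le_antisymm (not_lt.mp hno) (hxnn i)
    obtain ⟨i₁, hi₁⟩ := hex
    obtain ⟨a, ha, b, hb, hab⟩ := conn hδBroot hδBfull
      (s := {j | xq j ≠ 0}) ⟨i₁, hi₁⟩ ⟨i, fun h => h hxi0⟩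
    have hba : KB.A b a ≠ 0 := gcm_sym_ne hab
    have hZb : 0 ≤ Z b := by
      apply hZsome
      have := hδB1 b
      have hxb : xq b = 0 := not_not.mp hb
      rw [hxb]
      linarith
    have hZblt : Z b < 0 := by
      rw [hZ]
      simp only
      have h0' : (0 : ℚ) = ∑ _j : ιB, (0 : ℚ) := by simp
      rw [h0']
      apply Finset.sum_lt_sum
      · intro j _
        by_cases hxj : xq j = 0
        · rw [hxj]; simp
        · have hjb : j ≠ b := fun h => hxj (h ▸ not_not.mp hb)
          have h1 : (KB.A b j : ℚ) ≤ 0 := gcm_offdiag_nonpos (Ne.symm hjb)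
          have h2 : 0 < xq j := (hxnn j).lt_of_ne (Ne.symm hxj)
          exact mul_nonpos_of_nonpos_of_nonneg h1 h2.le
      · refine ⟨a, Finset.mem_univ a, ?_⟩
        have hba' : a ≠ b := fun h => (h ▸ ha) (not_not.mp hb)
        have h1 : (KB.A b a : ℚ) < 0 :=
          (gcm_offdiag_nonpos (Ne.symm hba')).lt_of_ne (by exact_mod_cast hba)
        have h2 : 0 < xq a := (hxnn a).lt_of_ne (Ne.symm ha)
        exact mul_neg_of_neg_of_pos h1 h2
    linarith
  set y : ιB → ℚ := fun j => δB j - xq j with hy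
  have hynn : ∀ j, 0 ≤ y j := fun j => by rw [hy]; simp only; linarith [hxle j]
  have hZnn : ∀ i, 0 ≤ Z i := by
    intro i
    by_cases hei : xq i = δB i
    · have hyi : y i = 0 := by show δB i - xq i = 0; linarith
      have hsum_y : ∑ j, (KB.A i j : ℚ) * y j = - Z i := by
        have e : ∀ j ∈ Finset.univ, (KB.A i j : ℚ) * y j
            = (KB.A i j : ℚ) * δB j - (KB.A i j : ℚ) * xq j := fun j _ => by
          show (KB.A i j : ℚ) * (δB j - xq j) = _
          ring
        rw [Finset.sum_congr rfl e, Finset.sum_sub_distrib, hBrow i]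
        show (0:ℚ) - (∑ j, (KB.A i j : ℚ) * xq j)
          = -(∑ j, (KB.A i j : ℚ) * xq j)
        ring
      have hterm : ∀ j ∈ Finset.univ, (KB.A i j : ℚ) * y j ≤ 0 := by
        intro j _
        rcases eq_or_ne j i with rfl | hj
        · rw [hyi]; simp
        · have h1 : (KB.A i j : ℚ) ≤ 0 := gcm_offdiag_nonpos (Ne.symm hj)
          exact mul_nonpos_of_nonpos_of_nonneg h1 (hynn j)
      have hle0 : ∑ j, (KB.A i j : ℚ) * y j ≤ 0 := Finset.sum_nonpos hterm
      rw [hsum_y] at hle0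
      linarith
    · exact hZsome i hei
  have hZzero : ∀ i, Z i = 0 := by
    have hw : ∑ i, (δB i * (KA.form (β i) (β i) / 2)) * Z i = 0 := by
      have e1 : ∑ i, (δB i * (KA.form (β i) (β i) / 2)) * Z i
          = KA.form (∑ j, δB j • β j) γ := by
        rw [form_sum_left]
        refine Finset.sum_congr rfl fun i _ => ?_
        rw [form_smul_left, hZform i]
        ring
      have e2 : KA.form (∑ j, δB j • β j) γ = 0 := by
        rw [KA.form_symm, hγ, form_sum_left]
        apply Finset.sum_eq_zero
        intro i _
        rw [form_smul_left, piSys_form_beta_qdelta KA KB δB β hBaff hSig i]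
        ring
      rw [e1, e2]
    have hterm : ∀ i ∈ Finset.univ, 0 ≤ (δB i * (KA.form (β i) (β i) / 2)) * Z i := by
      intro i _
      have h1 : 0 < δB i := lt_of_lt_of_le one_pos (hδB1 i)
      have h2 := KA.real_norm_pos _ (hβre i)
      have h3 := hZnn i
      positivity
    intro i
    have := (Finset.sum_eq_zero_iff_of_nonneg hterm).mp hw i (Finset.mem_univ i)
    have h1 : 0 < δB i := lt_of_lt_of_le one_pos (hδB1 i)
    have h2 := KA.real_norm_pos _ (hβre i)
    have h4 : δB i * (KA.form (β i) (β i) / 2) ≠ 0 := by positivity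
    rcases mul_eq_zero.mp this with h | h
    · exact absurd h h4
    · exact h
  have hiso0 : KA.form (∑ j, δB j • β j) (∑ j, δB j • β j) = 0 :=
    piSys_qdelta_iso KA KB δB β hBaff hSig
  -- find scaling constant
  have key : ∃ c : ℚ, 0 < c ∧ δB = c • xq := by
    by_cases hy0 : y = 0
    · refine ⟨1, one_pos, ?_⟩
      funext j
      have : y j = 0 := by rw [hy0]; rfl
      rw [hy] at this
      simp only at this
      simp only [Pi.smul_apply, smul_eq_mul, one_mul]
      linarith
    · obtain ⟨i₀, _, hmin⟩ := Finset.exists_min_image Finset.univ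
        (fun i => y i / xq i) ⟨j₀, Finset.mem_univ j₀⟩
      set lam : ℚ := y i₀ / xq i₀ with hlam
      set wv : ιB → ℚ := fun j => y j - lam * xq j with hwv
      have hwnn : Posv wv := by
        intro j
        show 0 ≤ y j - lam * xq j
        have h1 : lam ≤ y j / xq j := hmin j (Finset.mem_univ j)
        have h2 := hxpos j
        have := (le_div_iff₀ h2).mp h1
        linarith
      have hw0 : wv i₀ = 0 := by
        show y i₀ - lam * xq i₀ = 0
        have : lam * xq i₀ = y i₀ := by
          show y i₀ / xq i₀ * xq i₀ = y i₀
          exact div_mul_cancel₀ _ (hxpos i₀).ne'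
        rw [this]
        ring
      have hyrow : ∀ i, ∑ j, (KB.A i j : ℚ) * y j = 0 := by
        intro i
        have e : ∀ j ∈ Finset.univ, (KB.A i j : ℚ) * y j
            = (KB.A i j : ℚ) * δB j - (KB.A i j : ℚ) * xq j := fun j _ => by
          show (KB.A i j : ℚ) * (δB j - xq j) = _
          ring
        rw [Finset.sum_congr rfl e, Finset.sum_sub_distrib, hBrow i]
        have hz : (∑ j, (KB.A i j : ℚ) * xq j) = 0 := hZzero i
        rw [hz]
        ring
      have hwrow : ∀ i, ∑ j, (KB.A i j : ℚ) * wv j = 0 := by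
        intro i
        have e : ∀ j ∈ Finset.univ, (KB.A i j : ℚ) * wv j
            = (KB.A i j : ℚ) * y j - lam * ((KB.A i j : ℚ) * xq j) := fun j _ => by
          show (KB.A i j : ℚ) * (y j - lam * xq j) = _
          ring
        rw [Finset.sum_congr rfl e, Finset.sum_sub_distrib, hyrow i, ← Finset.mul_sum]
        have hz : (∑ j, (KB.A i j : ℚ) * xq j) = 0 := hZzero i
        rw [hz]
        ring
      have hwv0 : wv = 0 := ker_trivial hδBroot hδBfull hwrow hwnn hw0
      have hyeq : ∀ j, y j = lam * xq j := by
        intro j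
        have h0 : y j - lam * xq j = 0 := congrFun hwv0 j
        linarith
      have hlamnn : 0 ≤ lam := div_nonneg (hynn i₀) (hxpos i₀).le
      refine ⟨1 + lam, by linarith, ?_⟩
      funext j
      have h1 : δB j = xq j + y j := by rw [hy]; simp only; ring
      rw [h1, hyeq j]
      simp only [Pi.smul_apply, smul_eq_mul]
      ring
  obtain ⟨c, hc, hδBc⟩ := key
  refine ⟨γ, hxroot, c, hc, ?_, ?_⟩
  · rw [hδBc, hγ]
    rw [Finset.smul_sum]
    refine Finset.sum_congr rfl fun j _ => ?_
    simp only [Pi.smul_apply, smul_eq_mul]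
    rw [smul_smul]
  · have h1 : (∑ j, δB j • β j) = c • γ := by
      rw [hδBc, hγ, Finset.smul_sum]
      refine Finset.sum_congr rfl fun j _ => ?_
      simp only [Pi.smul_apply, smul_eq_mul]
      rw [smul_smul]
    rw [h1, form_smul_left, form_smul_right] at hiso0
    have hc2 : c * c ≠ 0 := by positivity
    have hthis : c * (c * KA.form γ γ) = 0 := hiso0
    rcases mul_eq_zero.mp hthis with h | h
    · exact absurd h hc.ne'
    · rcases mul_eq_zero.mp h with h2 | h2
      · exact absurd h2 hc.ne'
      · exact h2

end KacMoodyRootSystem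
open KacMoodyRootSystem in
/-- A linearly independent π-system Σ of affine type B in A can be moved
by some w ∈ W(A) so that it is supported in an affine subdiagram Y; such (Y, w) is
unique in the sense that for any other pair (Y′, w′), Y = Y′ and w′w⁻¹ ∈ W(Y ⊔ Y⊥). -/
theorem affine_piSystem_supported_in_affine_subdiagram {ιA ιB : Type}
    [Fintype ιA] [DecidableEq ιA] [Fintype ιB] [DecidableEq ιB]
    (KA : KacMoodyRootSystem ιA) (KB : KacMoodyRootSystem ιB)
    (δB : ιB → ℚ) (hBaff : KB.IsAffineNullRoot Set.univ δB)
    (β : ιB → (ιA → ℚ)) (hli : LinearIndependent ℚ β)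
    (hSig : KA.IsPiSysOfType β KB.A)
    (hkac : ∀ μ ∈ KA.roots, KA.form μ μ = 0 →
      ∃ Y δ, KA.IsAffineNullRoot Y δ ∧
        ∃ w ∈ KA.Weyl, ∃ kk : ℤ, kk ≠ 0 ∧ w μ = (kk : ℚ) • δ) :
    ∃ Y δ, KA.IsAffineNullRoot Y δ ∧
      ∃ w ∈ KA.Weyl, (∀ i, ∀ p, w (β i) p ≠ 0 → p ∈ Y) ∧
        ∀ Y' δ', KA.IsAffineNullRoot Y' δ' →
          ∀ w' ∈ KA.Weyl, (∀ i, ∀ p, w' (β i) p ≠ 0 → p ∈ Y') →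
            Y = Y' ∧ w' * w⁻¹ ∈ KA.ParabolicWeyl (Y ∪ KA.Perp Y) := by
  classical
  obtain ⟨μ₀, hμroot, c, hc, hqc, hμiso⟩ := exists_isotropic KA KB δB β hBaff hli hSig
  obtain ⟨Y, δ, haff, w, hwW, kk, hkk, hwμ⟩ := hkac μ₀ hμroot hμiso
  have hβre : ∀ i, β i ∈ KA.realRoots := hSig.1.2.1
  have hδB1 := deltaB_ge_one KA KB δB β hBaff hSig
  have hkkQ : ((kk : ℚ)) ≠ 0 := by exact_mod_cast hkk
  have hβμ0 : ∀ i, KA.form (β i) μ₀ = 0 := by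
    intro i
    have h1 := piSys_form_beta_qdelta KA KB δB β hBaff hSig i
    rw [hqc, form_smul_right] at h1
    rcases mul_eq_zero.mp h1 with h | h
    · exact absurd h hc.ne'
    · exact h
  have hγre : ∀ i, w (β i) ∈ KA.realRoots := fun i => weyl_real hwW (hβre i)
  have hγδ : ∀ i, KA.form (w (β i)) δ = 0 := by
    intro i
    have h1 : KA.form (w (β i)) (w μ₀) = 0 := by
      rw [weyl_form hwW]
      exact hβμ0 i
    rw [hwμ, form_smul_right] at h1
    rcases mul_eq_zero.mp h1 with h | h
    · exact absurd h hkkQ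
    · exact h
  have hwq : (∑ j, δB j • w (β j)) = (c * (kk : ℚ)) • δ := by
    have h1 : w (∑ j, δB j • β j) = ∑ j, δB j • w (β j) := by
      rw [map_sum]
      exact Finset.sum_congr rfl fun j _ => map_smul _ _ _
    rw [← h1, hqc, map_smul, hwμ, smul_smul]
  -- support of each w (β i) is contained in Y
  have hsupp : ∀ i, ∀ p, w (β i) p ≠ 0 → p ∈ Y := by
    set Pd : ιB → Prop := fun i => ¬ (∀ p, w (β i) p ≠ 0 → p ∈ Y) with hPd
    set J : Finset ιB := Finset.univ.filter Pd with hJ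
    have hPerp : ∀ i ∈ J, ∀ p, w (β i) p ≠ 0 → p ∈ KA.Perp Y := by
      intro i hiJ p hp
      have hiJ' : Pd i := (Finset.mem_filter.mp hiJ).2
      rcases supp_dichotomy haff (hγre i) (hγδ i) with h | h
      · exact absurd h hiJ'
      · exact h p hp
    have hzero : ∀ p, (∑ i ∈ J, δB i * w (β i) p) = 0 := by
      intro p
      by_cases hpP : p ∈ KA.Perp Y
      · have hδp : δ p = 0 := aff_zero haff hpP.1
        have htot : (∑ i, δB i * w (β i) p) = 0 := by
          have h2 := congrFun hwq p
          have h3 : (∑ j, δB j • w (β j)) p = ∑ j, δB j * w (β j) p := by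
            rw [Finset.sum_apply]
            exact Finset.sum_congr rfl fun j _ => rfl
          rw [h3] at h2
          rw [h2]
          simp [hδp]
        have hsplit := Finset.sum_filter_add_sum_filter_not Finset.univ Pd
          (fun i => δB i * w (β i) p)
        have hnot : (∑ i ∈ Finset.univ.filter (fun i => ¬ Pd i), δB i * w (β i) p) = 0 := by
          apply Finset.sum_eq_zero
          intro i hi
          have hni : ¬ Pd i := (Finset.mem_filter.mp hi).2
          have hiY : ∀ p', w (β i) p' ≠ 0 → p' ∈ Y := not_not.mp (by
            rw [hPd] at hni
            exact hni)
          have hzi : w (β i) p = 0 := by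
            by_contra h0
            exact hpP.1 (hiY p h0)
          rw [hzi, mul_zero]
        rw [hnot, add_zero] at hsplit
        rw [hJ]
        rw [hsplit]
        exact htot
      · apply Finset.sum_eq_zero
        intro i hiJ
        have hzi : w (β i) p = 0 := by
          by_contra h0
          exact hpP (hPerp i hiJ p h0)
        rw [hzi, mul_zero]
    have hzerovec : (∑ i ∈ J, δB i • w (β i)) = 0 := by
      funext p
      rw [Finset.sum_apply]
      have h0 := hzero p
      simpa using h0
    have hJempty : J = ∅ := by
      by_contra hne
      obtain ⟨i, hiJ⟩ := Finset.nonempty_of_ne_empty hne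
      have hlin := Fintype.linearIndependent_iff.mp
        (hli.map' (w : (ιA → ℚ) →ₗ[ℚ] (ιA → ℚ))
          (LinearMap.ker_eq_bot_of_injective w.injective))
      have hcoef := hlin (fun i => if i ∈ J then δB i else 0) (by
        have e : ∀ i ∈ Finset.univ,
            (if i ∈ J then δB i else 0) • ((w : (ιA → ℚ) →ₗ[ℚ] (ιA → ℚ)) ∘ β) i
            = (if i ∈ J then δB i • w (β i) else 0) := by
          intro i _
          split_ifs with h
          · rfl
          · rw [zero_smul]
        rw [Finset.sum_congr rfl e, ← Finset.sum_filter,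
          Finset.filter_mem_eq_inter, Finset.univ_inter]
        exact hzerovec)
      have h1 : (if i ∈ J then δB i else 0) = 0 := hcoef i
      rw [if_pos hiJ] at h1
      have h2 := hδB1 i
      linarith
    intro i p hp
    by_contra hpY
    have hiJ : i ∈ J := by
      rw [hJ, Finset.mem_filter]
      exact ⟨Finset.mem_univ i, fun h => hpY (h p hp)⟩
    rw [hJempty] at hiJ
    exact absurd hiJ (Finset.notMem_empty i)
  refine ⟨Y, δ, haff, w, hwW, hsupp, ?_⟩
  -- uniqueness
  intro Y' δ' haff' w' hw'W hsupp'
  have huW : w' * w⁻¹ ∈ KA.Weyl := mul_mem hw'W (inv_mem hwW)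
  have hw'q : w' (∑ j, δB j • β j) = ∑ j, δB j • w' (β j) := by
    rw [map_sum]
    exact Finset.sum_congr rfl fun j _ => map_smul _ _ _
  have hμ₀eq : μ₀ = c⁻¹ • (∑ j, δB j • β j) := by
    rw [hqc, smul_smul, inv_mul_cancel₀ hc.ne', one_smul]
  have hw'μsupp : ∀ p, w' μ₀ p ≠ 0 → p ∈ Y' := by
    intro p hp
    have h1 : w' μ₀ = c⁻¹ • (∑ j, δB j • w' (β j)) := by
      rw [hμ₀eq, map_smul, hw'q]
    rw [h1] at hp
    have h2 : (∑ j, δB j • w' (β j)) p ≠ 0 := by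
      intro h0
      apply hp
      simp [h0]
    rw [Finset.sum_apply] at h2
    obtain ⟨j, _, hj⟩ := Finset.exists_ne_zero_of_sum_ne_zero h2
    have h3 : w' (β j) p ≠ 0 := by
      intro h0
      apply hj
      simp [h0]
    exact hsupp' j p h3
  have hw'μiso : KA.form (w' μ₀) (w' μ₀) = 0 := by
    rw [weyl_form hw'W]
    exact hμiso
  obtain ⟨t₁, ht₁⟩ := psd haff' hw'μsupp hw'μiso
  have hδinv : w⁻¹ δ = (kk : ℚ)⁻¹ • μ₀ := by
    have h1 : w⁻¹ (w μ₀) = μ₀ := by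
      rw [← lmul_apply, inv_mul_cancel, lone_apply]
    rw [hwμ] at h1
    rw [← h1, map_smul, smul_smul, inv_mul_cancel₀ hkkQ, one_smul]
  have huδ : (w' * w⁻¹) δ = ((kk : ℚ)⁻¹ * t₁) • δ' := by
    have h1 : (w' * w⁻¹) δ = w' (w⁻¹ δ) := rfl
    rw [h1, hδinv, map_smul, ht₁, smul_smul]
  have hδroot : δ ∈ KA.roots := KA.im_sub haff.2.2.2.1
  have hδ'root : δ' ∈ KA.roots := KA.im_sub haff'.2.2.2.1
  have htne : ((kk : ℚ)⁻¹ * t₁) ≠ 0 := by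
    intro h0
    rw [h0, zero_smul] at huδ
    have hδ0 : δ = 0 := (LinearEquiv.map_eq_zero_iff _).mp huδ
    exact root_ne_zero KA hδroot hδ0
  have htpos : 0 < (kk : ℚ)⁻¹ * t₁ := by
    have hposv : Posv ((w' * w⁻¹) δ) := weyl_im_pos huW haff.2.2.2.1 haff.2.1
    obtain ⟨q₀, hq₀⟩ : ∃ q₀, δ' q₀ ≠ 0 := by
      by_contra h
      push_neg at h
      exact root_ne_zero KA hδ'root (funext h)
    have hq₀pos : 0 < δ' q₀ := (haff'.2.1 q₀).lt_of_ne (Ne.symm hq₀)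
    have h1 : 0 ≤ ((kk : ℚ)⁻¹ * t₁) * δ' q₀ := by
      have h2 := hposv q₀
      rw [huδ] at h2
      simpa using h2
    have h3 : 0 ≤ (kk : ℚ)⁻¹ * t₁ := by
      by_contra hlt
      push_neg at hlt
      nlinarith
    exact h3.lt_of_ne (Ne.symm htne)
  have hν : ∀ q, KA.form (Pi.single q 1) (((kk : ℚ)⁻¹ * t₁) • δ') ≤ 0 := by
    intro q
    rw [form_smul_right]
    exact mul_nonpos_of_nonneg_of_nonpos htpos.le (aff_antidom haff' q)
  obtain ⟨hfix, hmem⟩ := stab huW δ (((kk : ℚ)⁻¹ * t₁) • δ')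
    (fun q => aff_antidom haff q) hν huδ
  have hδeq : δ = ((kk : ℚ)⁻¹ * t₁) • δ' := hfix.symm.trans huδ
  constructor
  · ext q
    have hδq : δ q = ((kk : ℚ)⁻¹ * t₁) * δ' q := by
      rw [hδeq]
      simp
    constructor
    · intro hq
      apply (haff'.1 q).mp
      intro h0
      apply ((haff.1 q).mpr hq)
      rw [hδq, h0, mul_zero]
    · intro hq
      apply (haff.1 q).mp
      rw [hδq]
      exact mul_ne_zero htne ((haff'.1 q).mpr hq)
  · have hQ : {q | KA.form (Pi.single q 1) δ = 0} = Y ∪ KA.Perp Y :=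
      Set.ext fun q => aff_zero_iff haff q
    rw [hQ] at hmem
    exact hmem
end

section
/- Let X be a simply-laced Dynkin diagram, Y an affine subdiagram with null root δ_Y, and β a real root of X with (δ_Y, β) = −1. Then there exists σ in the parabolic subgroup W(Y ⊔ Y⊥) of W(X) such that σβ is a simple root of X. -/
set_option synthInstance.maxHeartbeats 1000000
set_option maxHeartbeats 1000000

/-! The pairing `(δ_Y, α_q)` vanishes for `q ∈ Y ∪ Y⊥` and is at most `-1` at every other vertex,
since such a vertex is joined to `Y`. Hence `(δ_Y, β) = -1` forces `β` to be positive with exactly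
one vertex `p` outside `Y ∪ Y⊥` in its support, carrying coefficient `1`. Reflections at vertices
of `Y ∪ Y⊥` preserve this shape, and as long as `β ≠ α_p` one of them strictly lowers the height:
otherwise `(β, β) ≥ 2` would force `⟨α_p∨, β⟩ ≥ 2`, and `s_p β` would be a root with coefficients
of both signs. -/

open Matrix

theorem Matrix.even_dotProduct_mulVec_self {ι : Type*} [Fintype ι] {A : Matrix ι ι ℤ}
    (hA : A.IsSymm) (hdiag : ∀ i, Even (A i i)) (v : ι → ℤ) : Even (v ⬝ᵥ (A *ᵥ v)) := by
  rw [← ZMod.intCast_eq_zero_iff_even]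
  simp only [dotProduct, mulVec, Finset.mul_sum, Int.cast_sum, Int.cast_mul]
  rw [← Finset.sum_product']
  refine Finset.sum_ninvolution Prod.swap (fun a => ?_) (fun a ha hfix => ha ?_)
    (fun _ => Finset.mem_univ _) Prod.swap_swap
  · rw [Prod.fst_swap, Prod.snd_swap, hA.apply a.1 a.2]
    calc _ = 2 * ((v a.1 : ZMod 2) * ((A a.1 a.2 : ZMod 2) * v a.2)) := by ring
      _ = 0 := by rw [show (2 : ZMod 2) = 0 from rfl, zero_mul]
  · rw [show a.2 = a.1 from congrArg Prod.fst hfix, (ZMod.intCast_eq_zero_iff_even.mpr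
      (hdiag a.1)), zero_mul, mul_zero]

namespace KacMoodyRootSystem

variable {ι : Type} [Fintype ι] [DecidableEq ι] (K : KacMoodyRootSystem ι)

theorem one_le_apply_of_mem_roots {α : ι → ℚ} (hα : α ∈ K.roots) {i : ι} (hi : 0 < α i) :
    1 ≤ α i := by
  obtain ⟨k, hk⟩ := K.root_int α hα i
  rw [hk] at hi ⊢
  exact_mod_cast Int.cast_pos.mp hi

theorem nonneg_of_mem_roots {α : ι → ℚ} (hα : α ∈ K.roots) {i : ι} (hi : 0 < α i) (j : ι) :
    0 ≤ α j :=
  (K.root_sign α hα).resolve_right (fun h => (h i).not_gt hi) j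

theorem form_eq_toLinearMap₂' (hsl : ∀ i, K.d i = 1) :
    K.form = Matrix.toLinearMap₂' ℚ (K.A.map (↑)) :=
  (LinearMap.toMatrix₂' ℚ).injective <| Matrix.ext fun i j => by
    simp [K.form_simple, hsl, Matrix.toLinearMap₂'_apply']

theorem form_apply_of_simplyLaced (hsl : ∀ i, K.d i = 1) (x y : ι → ℚ) :
    K.form x y = x ⬝ᵥ (K.A.map (↑) *ᵥ y) := by
  rw [K.form_eq_toLinearMap₂' hsl, Matrix.toLinearMap₂'_apply']

theorem pairing_single_of_simplyLaced (hsl : ∀ i, K.d i = 1) (i : ι) (y : ι → ℚ) :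
    (K.pairing (Pi.single i 1) y : ℚ) = (K.A.map (↑) *ᵥ y) i := by
  have h := K.pairing_eq _ (K.simple_real i) y
  simp only [K.form_apply_of_simplyLaced hsl, single_one_dotProduct,
    Matrix.mulVec_single_one, Matrix.col_apply, Matrix.map_apply, K.isGCM.1 i] at h
  push_cast at h
  linarith

theorem two_le_form_self (hsl : ∀ i, K.d i = 1) {α : ι → ℚ} (hα : α ∈ K.realRoots) :
    2 ≤ K.form α α := by
  choose k hk using K.root_int α (K.real_sub hα)
  have hsymm : K.A.IsSymm := Matrix.IsSymm.ext fun i j => by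
    exact_mod_cast (by simpa [hsl] using K.d_symm i j : (K.A i j : ℚ) = K.A j i).symm
  obtain ⟨m, hm⟩ := Matrix.even_dotProduct_mulVec_self hsymm
    (fun i => ⟨1, by rw [K.isGCM.1 i]; rfl⟩) k
  have hform : K.form α α = ((k ⬝ᵥ (K.A *ᵥ k) : ℤ) : ℚ) := by
    simp [K.form_apply_of_simplyLaced hsl, dotProduct, Matrix.mulVec, hk]
  have hpos := K.real_norm_pos α hα
  rw [hform, hm] at hpos ⊢
  push_cast at hpos ⊢
  have : 0 < m := by exact_mod_cast (by linarith : (0 : ℚ) < m)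
  exact_mod_cast (by omega : 2 ≤ m + m)

section NullRoot

variable {K} {Y : Set ι} {δ : ι → ℚ}

theorem mulVec_nullRoot_eq_zero (hsl : ∀ i, K.d i = 1) (haff : K.IsAffineNullRoot Y δ) {q : ι}
    (hq : q ∈ Y ∪ K.Perp Y) : (K.A.map (↑) *ᵥ δ) q = 0 := by
  rcases hq with hqY | hqPerp
  · have h := haff.2.2.2.2.1 q hqY
    rwa [K.form_symm, K.form_apply_of_simplyLaced hsl, single_one_dotProduct] at h
  · refine Finset.sum_eq_zero fun i _ => ?_
    by_cases hi : δ i = 0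
    · simp [hi]
    · simp [hqPerp.2 i ((haff.1 i).1 hi)]

theorem mulVec_nullRoot_le_neg_one (haff : K.IsAffineNullRoot Y δ) {q : ι}
    (hq : q ∉ Y ∪ K.Perp Y) : (K.A.map (↑) *ᵥ δ) q ≤ -1 := by
  have hqY : q ∉ Y := fun h => hq (Or.inl h)
  obtain ⟨i₀, hi₀Y, hAi₀⟩ : ∃ i ∈ Y, K.A q i ≠ 0 := by
    by_contra! h
    exact hq (Or.inr ⟨hqY, h⟩)
  have hterm : ∀ i, (K.A q i : ℚ) * δ i ≤ 0 := fun i => by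
    by_cases hi : δ i = 0
    · simp [hi]
    · have hiq : q ≠ i := fun h => hqY (h ▸ (haff.1 i).1 hi)
      exact mul_nonpos_of_nonpos_of_nonneg (by exact_mod_cast K.isGCM.2.1 q i hiq) (haff.2.1 i)
  have hδ : 1 ≤ δ i₀ := K.one_le_apply_of_mem_roots (K.im_sub haff.2.2.2.1)
    (lt_of_le_of_ne (haff.2.1 i₀) ((haff.1 i₀).2 hi₀Y).symm)
  have hA : (K.A q i₀ : ℚ) ≤ -1 := by
    have := K.isGCM.2.1 q i₀ fun h => hqY (h ▸ hi₀Y)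
    exact_mod_cast (by omega : K.A q i₀ ≤ -1)
  calc (K.A.map (↑) *ᵥ δ) q = ∑ i, (K.A q i : ℚ) * δ i := rfl
    _ ≤ (K.A q i₀ : ℚ) * δ i₀ := by
      rw [← Finset.add_sum_erase _ _ (Finset.mem_univ i₀)]
      linarith [Finset.sum_nonpos fun i (_ : i ∈ Finset.univ.erase i₀) => hterm i]
    _ ≤ -1 := by nlinarith

theorem exists_eq_one_of_form_nullRoot_eq_neg_one (hsl : ∀ i, K.d i = 1)
    (haff : K.IsAffineNullRoot Y δ) {β : ι → ℚ} (hβ : β ∈ K.realRoots)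
    (hform : K.form δ β = -1) :
    ∃ p ∉ Y ∪ K.Perp Y, β p = 1 ∧ ∀ q ∉ Y ∪ K.Perp Y, q ≠ p → β q = 0 := by
  set c := K.A.map (↑) *ᵥ δ
  have hsum : ∑ q, β q * c q = -1 := by
    rw [← hform, K.form_symm, K.form_apply_of_simplyLaced hsl]
    rfl
  have hc : ∀ q, c q ≤ 0 := fun q => by
    by_cases hq : q ∈ Y ∪ K.Perp Y
    · exact (mulVec_nullRoot_eq_zero hsl haff hq).le
    · linarith [mulVec_nullRoot_le_neg_one haff hq]
  have hβnn : ∀ q, 0 ≤ β q := (K.root_sign β (K.real_sub hβ)).resolve_right fun h => by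
    linarith [Finset.sum_nonneg fun q (_ : q ∈ Finset.univ) =>
      mul_nonneg_of_nonpos_of_nonpos (h q) (hc q)]
  obtain ⟨p, -, hp⟩ := Finset.exists_ne_zero_of_sum_ne_zero (by rw [hsum]; norm_num)
  have hpS : p ∉ Y ∪ K.Perp Y := fun h =>
    hp (mul_eq_zero_of_right _ (mulVec_nullRoot_eq_zero hsl haff h))
  have hβp : 1 ≤ β p := K.one_le_apply_of_mem_roots (K.real_sub hβ)
    (lt_of_le_of_ne (hβnn p) (left_ne_zero_of_mul hp).symm)
  have hterm : ∀ q, 0 ≤ -(β q * c q) := fun q => by nlinarith [hβnn q, hc q]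
  have hbound : ∀ q ∉ Y ∪ K.Perp Y, β q ≤ -(β q * c q) := fun q hq => by
    nlinarith [hβnn q, mulVec_nullRoot_le_neg_one haff hq]
  have htotal : ∑ q, -(β q * c q) = 1 := by rw [Finset.sum_neg_distrib, hsum, neg_neg]
  refine ⟨p, hpS, le_antisymm ?_ hβp, fun q hq hqp => le_antisymm ?_ (hβnn q)⟩
  · linarith [hbound p hpS, Finset.single_le_sum (fun q _ => hterm q) (Finset.mem_univ p)]
  · linarith [hbound p hpS, hbound q hq,
      Finset.add_le_sum (fun q _ => hterm q) (Finset.mem_univ p) (Finset.mem_univ q) hqp.symm]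

end NullRoot

theorem exists_pairing_pos_of_ne_single (hsl : ∀ i, K.d i = 1) {S : Set ι} {p : ι}
    {β : ι → ℚ} (hβ : β ∈ K.realRoots) (hβp : β p = 1) (hβS : ∀ q ∉ S, q ≠ p → β q = 0)
    (hne : β ≠ Pi.single p 1) : ∃ q ∈ S, 0 < K.pairing (Pi.single q 1) β := by
  have hβnn := K.nonneg_of_mem_roots (K.real_sub hβ) (i := p) (by rw [hβp]; exact one_pos)
  obtain ⟨q₀, hq₀p, hq₀⟩ : ∃ q₀ ≠ p, β q₀ ≠ 0 := by
    by_contra! h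
    refine hne (funext fun q => ?_)
    by_cases hq : q = p
    · simp [hq, hβp]
    · simp [hq, h q hq]
  by_contra! hS
  have hterm : ∀ i ≠ p, β i * (K.pairing (Pi.single i 1) β : ℚ) ≤ 0 := fun i hip => by
    by_cases hi : i ∈ S
    · exact mul_nonpos_of_nonneg_of_nonpos (hβnn i) (by exact_mod_cast hS i hi)
    · simp [hβS i hi hip]
  have hpair : 2 ≤ (K.pairing (Pi.single p 1) β : ℚ) := by
    calc 2 ≤ K.form β β := K.two_le_form_self hsl hβ
      _ = ∑ i, β i * (K.pairing (Pi.single i 1) β : ℚ) := by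
        simp only [K.form_apply_of_simplyLaced hsl, K.pairing_single_of_simplyLaced hsl,
          dotProduct]
      _ ≤ β p * (K.pairing (Pi.single p 1) β : ℚ) := by
        rw [← Finset.add_sum_erase _ _ (Finset.mem_univ p)]
        linarith [Finset.sum_nonpos fun i (hi : i ∈ Finset.univ.erase p) =>
          hterm i (Finset.ne_of_mem_erase hi)]
      _ = _ := by rw [hβp, one_mul]
  -- `s_p β` is a root whose coefficients at `q₀` and at `p` have opposite signs
  have hsign := K.nonneg_of_mem_roots (K.real_sub (K.reflection_real p β hβ)) (i := q₀)
    (by simpa [K.reflection_apply, hq₀p] using lt_of_le_of_ne (hβnn q₀) (Ne.symm hq₀)) p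
  simp only [K.reflection_apply, Pi.sub_apply, Pi.smul_apply, Pi.single_eq_same, smul_eq_mul,
    mul_one, hβp] at hsign
  linarith

theorem exists_mem_parabolicWeyl_apply_eq_single (hsl : ∀ i, K.d i = 1) {S : Set ι} {p : ι}
    (hp : p ∉ S) (n : ℕ) : ∀ β ∈ K.realRoots, β p = 1 → (∀ q ∉ S, q ≠ p → β q = 0) →
      ∑ q, β q ≤ n → ∃ σ ∈ K.ParabolicWeyl S, σ β = Pi.single p 1 := by
  induction n with
  | zero =>
    intro β hβ hβp _ hn
    rw [Nat.cast_zero] at hn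
    have hβnn := K.nonneg_of_mem_roots (K.real_sub hβ) (i := p) (by rw [hβp]; exact one_pos)
    linarith [Finset.single_le_sum (fun q _ => hβnn q) (Finset.mem_univ p)]
  | succ n ih =>
    intro β hβ hβp hβS hn
    by_cases hne : β = Pi.single p 1
    · exact ⟨1, one_mem _, hne⟩
    obtain ⟨q, hqS, hpos⟩ := K.exists_pairing_pos_of_ne_single hsl hβ hβp hβS hne
    have hqp : q ≠ p := fun h => hp (h ▸ hqS)
    have hsq := K.reflection_apply q β
    obtain ⟨σ, hσ, hσβ⟩ := ih (K.reflection q β) (K.reflection_real q β hβ)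
      (by simp [hsq, hqp.symm, hβp])
      (fun r hr hrp => by
        simp [hsq, hβS r hr hrp, Pi.single_eq_of_ne fun h : r = q => hr (h ▸ hqS)])
      (by
        have : (1 : ℚ) ≤ K.pairing (Pi.single q 1) β := by exact_mod_cast hpos
        simp only [hsq, Finset.sum_sub_distrib, Pi.sub_apply, Pi.smul_apply, smul_eq_mul,
          ← Finset.mul_sum, Finset.sum_pi_single', Finset.mem_univ, if_true]
        push_cast at hn
        linarith)
    exact ⟨σ * K.reflection q, mul_mem hσ (Subgroup.subset_closure ⟨q, hqS, rfl⟩), hσβ⟩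

end KacMoodyRootSystem

/-- (Lemma on simple-root conjugacy.) If X is simply-laced, Y an affine
subdiagram with null root δ_Y, and β a real root with (δ_Y, β) = −1, then some element
σ of the parabolic subgroup W(Y ⊔ Y⊥) sends β to a simple root. -/
theorem real_root_conjugate_to_simple {ι : Type} [Fintype ι] [DecidableEq ι]
    (K : KacMoodyRootSystem ι) (hsl : ∀ i, K.d i = 1)
    (Y : Set ι) (δY : ι → ℚ) (haff : K.IsAffineNullRoot Y δY)
    (β : ι → ℚ) (hβ : β ∈ K.realRoots) (hform : K.form δY β = -1) :
    ∃ σ ∈ K.ParabolicWeyl (Y ∪ K.Perp Y), ∃ i, σ β = (Pi.single i 1 : ι → ℚ) := by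
  obtain ⟨p, hp, hβp, hβS⟩ := K.exists_eq_one_of_form_nullRoot_eq_neg_one hsl haff hβ hform
  obtain ⟨σ, hσ, hσβ⟩ :=
    K.exists_mem_parabolicWeyl_apply_eq_single hsl hp _ β hβ hβp hβS (Nat.le_ceil _)
  exact ⟨σ, hσ, p, hσβ⟩
end
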